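/- arXiv:1809.04161 — 5 statements merged into one kernel-verified Lean document; each statement's English description precedes it below -/
import Mathlib

section
/- Let f, g, φ be smooth 2π-periodic functions on ℝ with Fourier coefficients f̂_k, ĝ_k, φ̂_k, and let 1/2 < α < 1 and 0 < β < α with α + β > 1. Then there is a constant C (depending only on α, β) such that |∫_{-π}^{π} f(x) g'(x) φ(x) dx| ≤ C ‖f‖_{C^α} ‖g‖_{C^α} ‖φ‖_{C^{1,α}}. -/
open Real

/-- Sup norm of a real function. -/
noncomputable def supNorm (f : ℝ → ℝ) : ℝ := ⨆ x : ℝ, |f x|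

/-- Hölder seminorm `[f]_α = sup_{x ≠ y} |f x - f y| / |x - y| ^ α`. -/
noncomputable def holderSemi (α : ℝ) (f : ℝ → ℝ) : ℝ :=
  ⨆ p : {p : ℝ × ℝ // p.1 ≠ p.2}, |f p.1.1 - f p.1.2| / |p.1.1 - p.1.2| ^ α

/-- Hölder norm `‖f‖_{C^α} = sup |f| + [f]_α`. -/
noncomputable def holderNorm (α : ℝ) (f : ℝ → ℝ) : ℝ := supNorm f + holderSemi α f

/-- `C^{1,α}` norm: `‖φ‖_{C^{1,α}} = ‖φ‖_{C^0} + ‖φ'‖_{C^α}`. -/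
noncomputable def c1HolderNorm (α : ℝ) (f : ℝ → ℝ) : ℝ := supNorm f + holderNorm α (deriv f)

/- ## auxiliary lemmas -/

lemma one_le_winf : (1 : WithTop ℕ∞) ≤ ((⊤ : ℕ∞) : WithTop ℕ∞) := by exact_mod_cast le_top

lemma aux_bdd_periodic (u : ℝ → ℝ) (hc : Continuous u) (hp : Function.Periodic u (2 * π)) :
    ∃ M, 0 ≤ M ∧ ∀ x, |u x| ≤ M := by
  obtain ⟨M, hM⟩ :=
    (isCompact_Icc (a := (0:ℝ)) (b := 2 * π)).exists_bound_of_continuousOn hc.continuousOn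
  refine ⟨max M 0, le_max_right _ _, fun x => ?_⟩
  obtain ⟨y, hy, hxy⟩ := hp.exists_mem_Ico₀ (by positivity) x
  rw [hxy]
  exact le_max_of_le_left (hM y (Set.mem_Icc_of_Ico hy))

lemma aux_periodic_deriv (u : ℝ → ℝ) (c : ℝ) (hp : Function.Periodic u c) :
    Function.Periodic (deriv u) c := by
  intro x
  have h1 : (fun y => u (y + c)) = u := funext hp
  rw [← deriv_comp_add_const, h1]

lemma aux_lip_of_deriv (u : ℝ → ℝ) (hu : Differentiable ℝ u) (L : ℝ)
    (hL : ∀ x, |deriv u x| ≤ L) : ∀ x y, |u x - u y| ≤ L * |x - y| := by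
  intro x y
  have := convex_univ.norm_image_sub_le_of_norm_deriv_le (𝕜 := ℝ) (s := Set.univ)
    (fun t _ => hu t) (fun t _ => hL t) (Set.mem_univ y) (Set.mem_univ x)
  simpa [Real.norm_eq_abs] using this

lemma aux_holder_of_lip (α : ℝ) (hα : 0 < α) (hα1 : α ≤ 1) (u : ℝ → ℝ) (M L : ℝ)
    (hM0 : 0 ≤ M) (hL0 : 0 ≤ L) (hM : ∀ x, |u x| ≤ M)
    (hLip : ∀ x y, |u x - u y| ≤ L * |x - y|) :
    ∀ x y, |u x - u y| ≤ (L + 2 * M) * |x - y| ^ α := by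
  intro x y
  rcases eq_or_ne x y with rfl | hxy
  · simp [sub_self, Real.zero_rpow hα.ne']
  have hd : 0 < |x - y| := abs_pos.mpr (sub_ne_zero.mpr hxy)
  have hrpos : (0:ℝ) ≤ |x - y| ^ α := Real.rpow_nonneg (abs_nonneg _) _
  rcases le_or_gt |x - y| 1 with h1 | h1
  · have h2 : |x - y| ≤ |x - y| ^ α := by
      calc |x - y| = |x - y| ^ (1:ℝ) := (Real.rpow_one _).symm
        _ ≤ |x - y| ^ α := Real.rpow_le_rpow_of_exponent_ge hd h1 hα1
    calc |u x - u y| ≤ L * |x - y| := hLip x y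
      _ ≤ L * |x - y| ^ α := by nlinarith
      _ ≤ (L + 2 * M) * |x - y| ^ α := by nlinarith
  · have h2 : (1:ℝ) ≤ |x - y| ^ α := Real.one_le_rpow h1.le hα.le
    calc |u x - u y| ≤ |u x| + |u y| := abs_sub _ _
      _ ≤ 2 * M := by have := hM x; have := hM y; linarith
      _ ≤ (L + 2 * M) * |x - y| ^ α := by nlinarith

lemma aux_supNorm_bddAbove (u : ℝ → ℝ) (M : ℝ) (hM : ∀ x, |u x| ≤ M) :
    BddAbove (Set.range fun x => |u x|) := ⟨M, by rintro _ ⟨x, rfl⟩; exact hM x⟩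

lemma aux_le_supNorm (u : ℝ → ℝ) (M : ℝ) (hM : ∀ x, |u x| ≤ M) (x : ℝ) :
    |u x| ≤ supNorm u := le_ciSup (aux_supNorm_bddAbove u M hM) x

lemma aux_supNorm_nonneg (u : ℝ → ℝ) (M : ℝ) (hM : ∀ x, |u x| ≤ M) : 0 ≤ supNorm u :=
  le_trans (abs_nonneg (u 0)) (aux_le_supNorm u M hM 0)

lemma aux_holderSemi_bddAbove (α : ℝ) (u : ℝ → ℝ) (K : ℝ)
    (hK : ∀ x y, |u x - u y| ≤ K * |x - y| ^ α) :
    BddAbove (Set.range fun p : {p : ℝ × ℝ // p.1 ≠ p.2} =>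
      |u p.1.1 - u p.1.2| / |p.1.1 - p.1.2| ^ α) := by
  refine ⟨K, ?_⟩
  rintro _ ⟨⟨⟨x, y⟩, hxy⟩, rfl⟩
  have hd : 0 < |x - y| := abs_pos.mpr (sub_ne_zero.mpr hxy)
  have hr : (0:ℝ) < |x - y| ^ α := Real.rpow_pos_of_pos hd _
  exact (div_le_iff₀ hr).mpr (hK x y)

lemma aux_abs_sub_le_holderSemi (α : ℝ) (hα : 0 < α) (u : ℝ → ℝ) (K : ℝ)
    (hK : ∀ x y, |u x - u y| ≤ K * |x - y| ^ α) (x y : ℝ) :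
    |u x - u y| ≤ holderSemi α u * |x - y| ^ α := by
  rcases eq_or_ne x y with rfl | hxy
  · simp [sub_self, Real.zero_rpow hα.ne']
  have hd : 0 < |x - y| := abs_pos.mpr (sub_ne_zero.mpr hxy)
  have hr : (0:ℝ) < |x - y| ^ α := Real.rpow_pos_of_pos hd _
  have h1 : |u x - u y| / |x - y| ^ α ≤ holderSemi α u :=
    le_ciSup (aux_holderSemi_bddAbove α u K hK) ⟨(x, y), hxy⟩
  calc |u x - u y| = |u x - u y| / |x - y| ^ α * |x - y| ^ α := by field_simp
    _ ≤ holderSemi α u * |x - y| ^ α := by nlinarith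

lemma aux_holderSemi_nonneg (α : ℝ) (u : ℝ → ℝ) (K : ℝ)
    (hK : ∀ x y, |u x - u y| ≤ K * |x - y| ^ α) : 0 ≤ holderSemi α u := by
  refine le_trans ?_ (le_ciSup (aux_holderSemi_bddAbove α u K hK)
    ⟨((0:ℝ), (1:ℝ)), by norm_num⟩)
  positivity

lemma aux_pkg (α : ℝ) (hα0 : 0 < α) (hα1 : α ≤ 1) (u : ℝ → ℝ)
    (hu : ContDiff ℝ ((⊤ : ℕ∞) : WithTop ℕ∞) u) (hup : Function.Periodic u (2 * π)) :
    (∀ x, |u x| ≤ supNorm u) ∧ 0 ≤ supNorm u ∧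
    (∀ x y, |u x - u y| ≤ holderSemi α u * |x - y| ^ α) ∧ 0 ≤ holderSemi α u := by
  obtain ⟨M, hM0, hMb⟩ := aux_bdd_periodic u hu.continuous hup
  obtain ⟨L, hL0, hLb⟩ := aux_bdd_periodic (deriv u) (hu.continuous_deriv one_le_winf)
    (aux_periodic_deriv u _ hup)
  have hlip := aux_lip_of_deriv u (hu.differentiable (by simp)) L hLb
  have hhol := aux_holder_of_lip α hα0 hα1 u M L hM0 hL0 hMb hlip
  exact ⟨aux_le_supNorm u M hMb, aux_supNorm_nonneg u M hMb,
    aux_abs_sub_le_holderSemi α hα0 u _ hhol, aux_holderSemi_nonneg α u _ hhol⟩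

lemma aux_shift_integral (u : ℝ → ℝ) (hp : Function.Periodic u (2 * π)) (h : ℝ) :
    ∫ x in (-π)..π, u (x + h) = ∫ x in (-π)..π, u x := by
  rw [intervalIntegral.integral_comp_add_right]
  have := hp.intervalIntegral_add_eq (-π + h) (-π)
  simpa [show -π + h + 2 * π = π + h by ring, show -π + 2 * π = π by ring] using this
set_option maxHeartbeats 1000000 in
lemma aux_key (α : ℝ) (hα2 : 1 < 2 * α) (F g : ℝ → ℝ)
    (hF : Continuous F) (hFp : Function.Periodic F (2 * π))
    (hg : ContDiff ℝ ((⊤ : ℕ∞) : WithTop ℕ∞) g) (hgp : Function.Periodic g (2 * π))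
    (MF KF Kg L : ℝ) (hMF0 : 0 ≤ MF) (hKF0 : 0 ≤ KF) (hKg0 : 0 ≤ Kg) (hL0 : 0 ≤ L)
    (hMF : ∀ x, |F x| ≤ MF)
    (hKF : ∀ x y, |F x - F y| ≤ KF * |x - y| ^ α)
    (hKg : ∀ x y, |g x - g y| ≤ Kg * |x - y| ^ α)
    (hL : ∀ x y, |deriv g x - deriv g y| ≤ L * |x - y|) :
    |∫ x in (-π)..π, F x * deriv g x| ≤
      2 * π * MF * Kg + π * KF * Kg * (1 - 2 ^ (1 - 2 * α))⁻¹ := by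
  set r : ℝ := 2 ^ (1 - 2 * α) with hrdef
  have hr0 : 0 < r := Real.rpow_pos_of_pos two_pos _
  have hr1 : r < 1 := Real.rpow_lt_one_of_one_lt_of_neg one_lt_two (by linarith)
  have h1r : 0 < 1 - r := by linarith
  have hgc : Continuous g := hg.continuous
  have hgd : Differentiable ℝ g := hg.differentiable (by simp)
  have hg'c : Continuous (deriv g) := hg.continuous_deriv one_le_winf
  set K : ℝ → ℝ := fun h => (∫ x in (-π)..π, F x * (g (x + h) - g x)) / h with hKdef
  have hDpos : (0:ℝ) ≤ π * KF * Kg := by positivity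
  -- step estimate
  have step : ∀ h : ℝ, 0 < h → |K (2 * h) - K h| ≤ π * KF * Kg * h ^ (2 * α - 1) := by
    intro h hh
    have i1 : IntervalIntegrable (fun x => F x * (g (x + 2 * h) - g (x + h)))
        MeasureTheory.volume (-π) π :=
      (hF.mul ((hgc.comp (continuous_id.add continuous_const)).sub (hgc.comp (continuous_id.add continuous_const)))).intervalIntegrable _ _
    have i2 : IntervalIntegrable (fun x => F x * (g (x + h) - g x))
        MeasureTheory.volume (-π) π :=
      (hF.mul ((hgc.comp (continuous_id.add continuous_const)).sub hgc)).intervalIntegrable _ _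
    have iS : IntervalIntegrable (fun x => F (x - h) * (g (x + h) - g x))
        MeasureTheory.volume (-π) π :=
      ((hF.comp (continuous_id.sub continuous_const)).mul ((hgc.comp (continuous_id.add continuous_const)).sub hgc)).intervalIntegrable _ _
    have e1 : (∫ x in (-π)..π, F x * (g (x + 2 * h) - g x))
        = (∫ x in (-π)..π, F x * (g (x + 2 * h) - g (x + h)))
          + ∫ x in (-π)..π, F x * (g (x + h) - g x) := by
      rw [← intervalIntegral.integral_add i1 i2]
      apply intervalIntegral.integral_congr
      intro x _
      ring
    have e2 : (∫ x in (-π)..π, F x * (g (x + 2 * h) - g (x + h)))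
        = ∫ x in (-π)..π, F (x - h) * (g (x + h) - g x) := by
      have hu : Function.Periodic (fun y => F (y - h) * (g (y + h) - g y)) (2 * π) := by
        intro x
        simp only
        rw [show x + 2 * π - h = (x - h) + 2 * π by ring,
          show x + 2 * π + h = (x + h) + 2 * π by ring, hFp, hgp, hgp]
      calc (∫ x in (-π)..π, F x * (g (x + 2 * h) - g (x + h)))
          = ∫ x in (-π)..π, (fun y => F (y - h) * (g (y + h) - g y)) (x + h) := by
            apply intervalIntegral.integral_congr
            intro x _
            simp only
            rw [show x + h - h = x by ring, show x + h + h = x + 2 * h by ring]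
        _ = _ := aux_shift_integral _ hu h
    have e3 : (∫ x in (-π)..π, F x * (g (x + 2 * h) - g x))
          - 2 * ∫ x in (-π)..π, F x * (g (x + h) - g x)
        = ∫ x in (-π)..π, (F (x - h) - F x) * (g (x + h) - g x) := by
      rw [e1, e2]
      rw [show (∫ x in (-π)..π, F (x - h) * (g (x + h) - g x))
            + (∫ x in (-π)..π, F x * (g (x + h) - g x))
            - 2 * ∫ x in (-π)..π, F x * (g (x + h) - g x)
          = (∫ x in (-π)..π, F (x - h) * (g (x + h) - g x))
            - ∫ x in (-π)..π, F x * (g (x + h) - g x) by ring]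
      rw [← intervalIntegral.integral_sub iS i2]
      apply intervalIntegral.integral_congr
      intro x _
      ring
    have hb : |∫ x in (-π)..π, (F (x - h) - F x) * (g (x + h) - g x)|
        ≤ KF * h ^ α * (Kg * h ^ α) * (2 * π) := by
      have hbd : ∀ x ∈ Set.uIoc (-π) π,
          ‖(F (x - h) - F x) * (g (x + h) - g x)‖ ≤ KF * h ^ α * (Kg * h ^ α) := by
        intro x _
        rw [Real.norm_eq_abs, abs_mul]
        have t1 : |F (x - h) - F x| ≤ KF * h ^ α := by
          have := hKF (x - h) x
          rwa [show x - h - x = -h by ring, abs_neg, abs_of_pos hh] at this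
        have t2 : |g (x + h) - g x| ≤ Kg * h ^ α := by
          have := hKg (x + h) x
          rwa [show x + h - x = h by ring, abs_of_pos hh] at this
        have hrp : (0:ℝ) ≤ h ^ α := Real.rpow_nonneg hh.le _
        exact mul_le_mul t1 t2 (abs_nonneg _) (by positivity)
      have := intervalIntegral.norm_integral_le_of_norm_le_const hbd
      rwa [Real.norm_eq_abs, show π - (-π) = 2 * π by ring,
        abs_of_nonneg (by positivity : (0:ℝ) ≤ 2 * π)] at this
    have e4 : K (2 * h) - K h
        = ((∫ x in (-π)..π, F x * (g (x + 2 * h) - g x))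
            - 2 * ∫ x in (-π)..π, F x * (g (x + h) - g x)) / (2 * h) := by
      simp only [hKdef]
      field_simp
    rw [e4, e3, abs_div, abs_of_pos (by linarith : (0:ℝ) < 2 * h)]
    rw [div_le_iff₀ (by linarith : (0:ℝ) < 2 * h)]
    have hne : h ≠ 0 := hh.ne'
    have heq : π * KF * Kg * h ^ (2 * α - 1) * (2 * h) = KF * h ^ α * (Kg * h ^ α) * (2 * π) := by
      rw [Real.rpow_sub hh, Real.rpow_one, show (2:ℝ) * α = α + α by ring, Real.rpow_add hh]
      field_simp
    rw [heq]
    exact hb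
  -- dyadic sequence
  set hs : ℕ → ℝ := fun N => (2:ℝ) ^ (-(N:ℝ)) with hsdef
  have hs0 : ∀ N, 0 < hs N := fun N => Real.rpow_pos_of_pos two_pos _
  have hs_succ : ∀ N : ℕ, 2 * hs (N + 1) = hs N := by
    intro N
    show 2 * (2:ℝ) ^ (-((N + 1 : ℕ):ℝ)) = (2:ℝ) ^ (-(N:ℝ))
    rw [show -((N + 1 : ℕ):ℝ) = -(N:ℝ) - 1 by push_cast; ring,
      Real.rpow_sub two_pos, Real.rpow_one]
    ring
  have hs_pow : ∀ N : ℕ, hs (N + 1) ^ (2 * α - 1) = r ^ (N + 1) := by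
    intro N
    show ((2:ℝ) ^ (-((N + 1 : ℕ):ℝ))) ^ (2 * α - 1) = r ^ (N + 1)
    rw [← Real.rpow_natCast r (N + 1), hrdef, ← Real.rpow_mul (by norm_num : (0:ℝ) ≤ 2),
      ← Real.rpow_mul (by norm_num : (0:ℝ) ≤ 2)]
    congr 1
    push_cast
    ring
  have hs_eq : ∀ N : ℕ, hs N = (2⁻¹ : ℝ) ^ N := by
    intro N
    show (2:ℝ) ^ (-(N:ℝ)) = (2⁻¹ : ℝ) ^ N
    rw [Real.rpow_neg (by norm_num : (0:ℝ) ≤ 2), Real.rpow_natCast, ← inv_pow]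
  have hs_tendsto : Filter.Tendsto hs Filter.atTop (nhds 0) := by
    have : hs = fun N => (2⁻¹ : ℝ) ^ N := funext hs_eq
    rw [this]
    exact tendsto_pow_atTop_nhds_zero_of_lt_one (by norm_num) (by norm_num)
  have hs_zero : hs 0 = 1 := by
    show (2:ℝ) ^ (-((0:ℕ):ℝ)) = 1
    norm_num
  -- induction
  have hKN : ∀ N : ℕ, |K (hs N)| ≤ |K 1| + π * KF * Kg * ((1 - r)⁻¹ * (1 - r ^ N)) := by
    intro N
    induction N with
    | zero =>
      rw [hs_zero]
      simp
    | succ N ih =>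
      have h1 : |K (hs N) - K (hs (N + 1))| ≤ π * KF * Kg * (hs (N + 1)) ^ (2 * α - 1) := by
        have := step (hs (N + 1)) (hs0 (N + 1))
        rwa [hs_succ N] at this
      rw [hs_pow N] at h1
      have h2 : |K (hs (N + 1))| ≤ |K (hs N)| + π * KF * Kg * r ^ (N + 1) := by
        have e : K (hs (N + 1)) = K (hs N) - (K (hs N) - K (hs (N + 1))) := by ring
        calc |K (hs (N + 1))| = |K (hs N) - (K (hs N) - K (hs (N + 1)))| := by rw [← e]
          _ ≤ |K (hs N)| + |K (hs N) - K (hs (N + 1))| := abs_sub _ _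
          _ ≤ |K (hs N)| + π * KF * Kg * r ^ (N + 1) := by linarith
      have hgeom : (1 - r)⁻¹ * (1 - r ^ N) + r ^ N = (1 - r)⁻¹ * (1 - r ^ (N + 1)) := by
        field_simp
        ring
      have hrpow : r ^ (N + 1) ≤ r ^ N := by
        rw [pow_succ]
        nlinarith [pow_nonneg hr0.le N]
      have hmono : π * KF * Kg * r ^ (N + 1) ≤ π * KF * Kg * r ^ N :=
        mul_le_mul_of_nonneg_left hrpow hDpos
      calc |K (hs (N + 1))| ≤ |K (hs N)| + π * KF * Kg * r ^ (N + 1) := h2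
        _ ≤ |K 1| + π * KF * Kg * ((1 - r)⁻¹ * (1 - r ^ N)) + π * KF * Kg * r ^ N := by
            linarith
        _ = |K 1| + π * KF * Kg * ((1 - r)⁻¹ * (1 - r ^ (N + 1))) := by
            rw [← hgeom]; ring
  -- bound for K 1
  have hK1 : |K 1| ≤ 2 * π * MF * Kg := by
    have : K 1 = ∫ x in (-π)..π, F x * (g (x + 1) - g x) := by
      simp only [hKdef, div_one]
    rw [this]
    have hbd : ∀ x ∈ Set.uIoc (-π) π, ‖F x * (g (x + 1) - g x)‖ ≤ MF * Kg := by
      intro x _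
      rw [Real.norm_eq_abs, abs_mul]
      have t2 : |g (x + 1) - g x| ≤ Kg := by
        have := hKg (x + 1) x
        rwa [show x + 1 - x = (1:ℝ) by ring, abs_one, Real.one_rpow, mul_one] at this
      exact mul_le_mul (hMF x) t2 (abs_nonneg _) hMF0
    have := intervalIntegral.norm_integral_le_of_norm_le_const hbd
    rw [Real.norm_eq_abs, show π - (-π) = 2 * π by ring,
      abs_of_nonneg (by positivity : (0:ℝ) ≤ 2 * π)] at this
    linarith
  -- K h is close to the integral
  have hclose : ∀ h : ℝ, 0 < h →
      |(∫ x in (-π)..π, F x * deriv g x) - K h| ≤ MF * L * (2 * π) * h := by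
    intro h hh
    have hne : h ≠ 0 := hh.ne'
    have iI : IntervalIntegrable (fun x => F x * deriv g x) MeasureTheory.volume (-π) π :=
      (hF.mul hg'c).intervalIntegrable _ _
    have i2 : IntervalIntegrable (fun x => F x * (g (x + h) - g x) / h)
        MeasureTheory.volume (-π) π :=
      ((hF.mul ((hgc.comp (continuous_id.add continuous_const)).sub hgc)).div_const h).intervalIntegrable _ _
    have hKint : K h = ∫ x in (-π)..π, F x * (g (x + h) - g x) / h := by
      simp only [hKdef]
      rw [intervalIntegral.integral_div]
    rw [hKint, ← intervalIntegral.integral_sub iI i2]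
    have hbd : ∀ x ∈ Set.uIoc (-π) π,
        ‖F x * deriv g x - F x * (g (x + h) - g x) / h‖ ≤ MF * (L * h) := by
      intro x _
      have hmvt : |g (x + h) - g x - h * deriv g x| ≤ L * h * h := by
        have hder : ∀ t ∈ Set.Icc x (x + h),
            HasDerivWithinAt (fun t => g t - deriv g x * t) (deriv g t - deriv g x)
              (Set.Icc x (x + h)) t := by
          intro t _
          have h1 : HasDerivAt g (deriv g t) t := (hgd t).hasDerivAt
          have h2 : HasDerivAt (fun t => deriv g x * t) (deriv g x) t := by
            simpa using (hasDerivAt_id t).const_mul (deriv g x)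
          exact (h1.sub h2).hasDerivWithinAt
        have hbd2 : ∀ t ∈ Set.Icc x (x + h), ‖deriv g t - deriv g x‖ ≤ L * h := by
          intro t ht
          rw [Real.norm_eq_abs]
          refine (hL t x).trans ?_
          have habs : |t - x| ≤ h := by
            rw [abs_of_nonneg (by linarith [ht.1])]
            linarith [ht.2]
          nlinarith
        have := (convex_Icc x (x + h)).norm_image_sub_le_of_norm_hasDerivWithin_le hder hbd2
          (Set.left_mem_Icc.mpr (by linarith)) (Set.right_mem_Icc.mpr (by linarith))
        rw [Real.norm_eq_abs, Real.norm_eq_abs] at this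
        have e : g (x + h) - deriv g x * (x + h) - (g x - deriv g x * x)
            = g (x + h) - g x - h * deriv g x := by ring
        rw [e, show x + h - x = h by ring, abs_of_pos hh] at this
        exact this
      rw [Real.norm_eq_abs]
      have e2 : F x * deriv g x - F x * (g (x + h) - g x) / h
          = F x * (-((g (x + h) - g x - h * deriv g x) / h)) := by
        field_simp
        ring
      rw [e2, abs_mul, abs_neg, abs_div, abs_of_pos hh]
      refine mul_le_mul (hMF x) ?_ (by positivity) hMF0
      rw [div_le_iff₀ hh]
      nlinarith
    have := intervalIntegral.norm_integral_le_of_norm_le_const hbd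
    rw [Real.norm_eq_abs, show π - (-π) = 2 * π by ring,
      abs_of_nonneg (by positivity : (0:ℝ) ≤ 2 * π)] at this
    refine this.trans (le_of_eq (by ring))
  -- combine
  have hIN : ∀ N : ℕ, |∫ x in (-π)..π, F x * deriv g x|
      ≤ (|K 1| + π * KF * Kg * (1 - r)⁻¹) + MF * L * (2 * π) * hs N := by
    intro N
    have t1 := hKN N
    have t2 := hclose (hs N) (hs0 N)
    have t3 : |∫ x in (-π)..π, F x * deriv g x|
        ≤ |K (hs N)| + |(∫ x in (-π)..π, F x * deriv g x) - K (hs N)| := by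
      have e : (∫ x in (-π)..π, F x * deriv g x)
          = K (hs N) + ((∫ x in (-π)..π, F x * deriv g x) - K (hs N)) := by ring
      calc |∫ x in (-π)..π, F x * deriv g x|
          = |K (hs N) + ((∫ x in (-π)..π, F x * deriv g x) - K (hs N))| := by rw [← e]
        _ ≤ _ := abs_add_le _ _
    have hr2 : (1 - r)⁻¹ * (1 - r ^ N) ≤ (1 - r)⁻¹ := by
      have : 1 - r ^ N ≤ 1 := by nlinarith [pow_nonneg hr0.le N]
      nlinarith [inv_pos.mpr h1r]
    have hr3 : π * KF * Kg * ((1 - r)⁻¹ * (1 - r ^ N)) ≤ π * KF * Kg * (1 - r)⁻¹ :=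
      (mul_le_mul_of_nonneg_left hr2 hDpos).trans_eq (by ring)
    linarith
  have hlim : Filter.Tendsto
      (fun N : ℕ => (|K 1| + π * KF * Kg * (1 - r)⁻¹) + MF * L * (2 * π) * hs N)
      Filter.atTop (nhds ((|K 1| + π * KF * Kg * (1 - r)⁻¹) + MF * L * (2 * π) * 0)) :=
    tendsto_const_nhds.add (hs_tendsto.const_mul _)
  have hfin : |∫ x in (-π)..π, F x * deriv g x| ≤ |K 1| + π * KF * Kg * (1 - r)⁻¹ := by
    have := ge_of_tendsto' hlim hIN
    simpa using this
  calc |∫ x in (-π)..π, F x * deriv g x| ≤ |K 1| + π * KF * Kg * (1 - r)⁻¹ := hfin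
    _ ≤ 2 * π * MF * Kg + π * KF * Kg * (1 - r)⁻¹ := by linarith
set_option maxHeartbeats 1000000 in
/-- for smooth `2π`-periodic `f, g, φ` and `1/2 < α < 1`, `0 < β < α`,
`α + β > 1`, one has `|∫ f g' φ| ≤ C ‖f‖_{C^α} ‖g‖_{C^α} ‖φ‖_{C^{1,α}}` with `C = C(α, β)`. -/
theorem stmt0 (α β : ℝ) (hα : 1/2 < α) (hα1 : α < 1) (hβ : 0 < β) (hβα : β < α)
    (hαβ : 1 < α + β) :
    ∃ C > 0, ∀ f g φ : ℝ → ℝ,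
      ContDiff ℝ (⊤ : ℕ∞) f → Function.Periodic f (2 * π) →
      ContDiff ℝ (⊤ : ℕ∞) g → Function.Periodic g (2 * π) →
      ContDiff ℝ (⊤ : ℕ∞) φ → Function.Periodic φ (2 * π) →
      |∫ x in (-π)..π, f x * deriv g x * φ x| ≤
        C * holderNorm α f * holderNorm α g * c1HolderNorm α φ := by
  have hα0 : 0 < α := by linarith
  have hα2 : 1 < 2 * α := by linarith
  set r : ℝ := 2 ^ (1 - 2 * α) with hrdef
  have hr0 : 0 < r := Real.rpow_pos_of_pos two_pos _
  have hr1 : r < 1 := Real.rpow_lt_one_of_one_lt_of_neg one_lt_two (by linarith)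
  have h1r : 0 < 1 - r := by linarith
  refine ⟨2 * π + 4 * π * (1 - r)⁻¹, by positivity, ?_⟩
  intro f g φ hf' hfp hg' hgp hφ' hφp
  have hf : ContDiff ℝ ((⊤ : ℕ∞) : WithTop ℕ∞) f := hf'.of_le (by simp)
  have hg : ContDiff ℝ ((⊤ : ℕ∞) : WithTop ℕ∞) g := hg'.of_le (by simp)
  have hφ : ContDiff ℝ ((⊤ : ℕ∞) : WithTop ℕ∞) φ := hφ'.of_le (by simp)
  obtain ⟨hfs, hfs0, hfsemi, hfsemi0⟩ := aux_pkg α hα0 hα1.le f hf hfp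
  obtain ⟨hgs, hgs0, hgsemi, hgsemi0⟩ := aux_pkg α hα0 hα1.le g hg hgp
  obtain ⟨hφs, hφs0, hφsemi, hφsemi0⟩ := aux_pkg α hα0 hα1.le φ hφ hφp
  have hdφ : ContDiff ℝ ((⊤ : ℕ∞) : WithTop ℕ∞) (deriv φ) := (contDiff_infty_iff_deriv.mp hφ).2
  have hφ'p : Function.Periodic (deriv φ) (2 * π) := aux_periodic_deriv φ _ hφp
  obtain ⟨hφ's, hφ's0, hφ'semi, hφ'semi0⟩ := aux_pkg α hα0 hα1.le (deriv φ) hdφ hφ'p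
  have hφlip : ∀ x y, |φ x - φ y| ≤ supNorm (deriv φ) * |x - y| :=
    aux_lip_of_deriv φ (hφ.differentiable (by simp)) _ hφ's
  have hφhol : ∀ x y, |φ x - φ y| ≤ (supNorm (deriv φ) + 2 * supNorm φ) * |x - y| ^ α :=
    aux_holder_of_lip α hα0 hα1.le φ (supNorm φ) (supNorm (deriv φ)) hφs0 hφ's0 hφs hφlip
  have hdg : ContDiff ℝ ((⊤ : ℕ∞) : WithTop ℕ∞) (deriv g) := (contDiff_infty_iff_deriv.mp hg).2
  obtain ⟨L2, hL20, hL2b⟩ := aux_bdd_periodic (deriv (deriv g)) (hdg.continuous_deriv one_le_winf)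
    (aux_periodic_deriv _ _ (aux_periodic_deriv g _ hgp))
  have hg'lip : ∀ x y, |deriv g x - deriv g y| ≤ L2 * |x - y| :=
    aux_lip_of_deriv (deriv g) (hdg.differentiable (by simp)) L2 hL2b
  set MF := supNorm f * supNorm φ with hMFdef
  set Kφ := supNorm (deriv φ) + 2 * supNorm φ with hKφdef
  set KF := supNorm f * Kφ + supNorm φ * holderSemi α f with hKFdef
  have hKφ0 : 0 ≤ Kφ := by rw [hKφdef]; linarith
  have hMF0 : 0 ≤ MF := mul_nonneg hfs0 hφs0
  have hKF0 : 0 ≤ KF := by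
    rw [hKFdef]
    have := mul_nonneg hfs0 hKφ0
    have := mul_nonneg hφs0 hfsemi0
    linarith
  have hFc : Continuous (fun x => f x * φ x) := hf.continuous.mul hφ.continuous
  have hFp : Function.Periodic (fun x => f x * φ x) (2 * π) := by
    intro x
    simp only
    rw [hfp x, hφp x]
  have hMFb : ∀ x, |f x * φ x| ≤ MF := by
    intro x
    rw [abs_mul]
    exact mul_le_mul (hfs x) (hφs x) (abs_nonneg _) hfs0
  have hKFb : ∀ x y, |f x * φ x - f y * φ y| ≤ KF * |x - y| ^ α := by
    intro x y
    have e : f x * φ x - f y * φ y = f x * (φ x - φ y) + φ y * (f x - f y) := by ring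
    calc |f x * φ x - f y * φ y| = |f x * (φ x - φ y) + φ y * (f x - f y)| := by rw [← e]
      _ ≤ |f x * (φ x - φ y)| + |φ y * (f x - f y)| := abs_add_le _ _
      _ = |f x| * |φ x - φ y| + |φ y| * |f x - f y| := by rw [abs_mul, abs_mul]
      _ ≤ supNorm f * (Kφ * |x - y| ^ α) + supNorm φ * (holderSemi α f * |x - y| ^ α) := by
          have h1 := mul_le_mul (hfs x) (hφhol x y) (abs_nonneg _) hfs0
          have h2 := mul_le_mul (hφs y) (hfsemi x y) (abs_nonneg _) hφs0
          linarith
      _ = KF * |x - y| ^ α := by rw [hKFdef]; ring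
  have hmain := aux_key α hα2 (fun x => f x * φ x) g hFc hFp hg hgp MF KF (holderSemi α g) L2
    hMF0 hKF0 hgsemi0 hL20 hMFb hKFb hgsemi hg'lip
  have hintg : (∫ x in (-π)..π, f x * deriv g x * φ x)
      = ∫ x in (-π)..π, (fun x => f x * φ x) x * deriv g x := by
    apply intervalIntegral.integral_congr
    intro x _
    simp only
    ring
  rw [hintg]
  -- comparison of constants
  have hNf : holderNorm α f = supNorm f + holderSemi α f := rfl
  have hNg : holderNorm α g = supNorm g + holderSemi α g := rfl
  have hNφ : c1HolderNorm α φ = supNorm φ + (supNorm (deriv φ) + holderSemi α (deriv φ)) := rfl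
  have hNf0 : 0 ≤ holderNorm α f := by rw [hNf]; linarith
  have hNg0 : 0 ≤ holderNorm α g := by rw [hNg]; linarith
  have hNφ0 : 0 ≤ c1HolderNorm α φ := by rw [hNφ]; linarith
  have hsf : supNorm f ≤ holderNorm α f := by rw [hNf]; linarith
  have hsemif : holderSemi α f ≤ holderNorm α f := by rw [hNf]; linarith
  have hsemig : holderSemi α g ≤ holderNorm α g := by rw [hNg]; linarith
  have hsφ : supNorm φ ≤ c1HolderNorm α φ := by rw [hNφ]; linarith
  have hs'φ : supNorm (deriv φ) ≤ c1HolderNorm α φ := by rw [hNφ]; linarith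
  have hKφ3 : Kφ ≤ 3 * c1HolderNorm α φ := by rw [hKφdef, hNφ]; linarith
  have P0 : MF ≤ holderNorm α f * c1HolderNorm α φ :=
    mul_le_mul hsf hsφ hφs0 hNf0
  have P1 : MF * holderSemi α g ≤ holderNorm α f * c1HolderNorm α φ * holderNorm α g :=
    mul_le_mul P0 hsemig hgsemi0 (mul_nonneg hNf0 hNφ0)
  have PK : KF ≤ 4 * (holderNorm α f * c1HolderNorm α φ) := by
    have q1 : supNorm f * Kφ ≤ holderNorm α f * (3 * c1HolderNorm α φ) :=
      mul_le_mul hsf hKφ3 hKφ0 hNf0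
    have q2 : supNorm φ * holderSemi α f ≤ c1HolderNorm α φ * holderNorm α f :=
      mul_le_mul hsφ hsemif hfsemi0 hNφ0
    rw [hKFdef]
    nlinarith
  have P2 : KF * holderSemi α g ≤ 4 * (holderNorm α f * c1HolderNorm α φ) * holderNorm α g :=
    mul_le_mul PK hsemig hgsemi0 (by positivity)
  have hinv0 : (0:ℝ) < (1 - r)⁻¹ := inv_pos.mpr h1r
  have q1 := mul_le_mul_of_nonneg_left P1 (by positivity : (0:ℝ) ≤ 2 * π)
  have q2 := mul_le_mul_of_nonneg_left P2 (by positivity : (0:ℝ) ≤ π * (1 - r)⁻¹)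
  nlinarith [hmain, q1, q2]
end

section
/- Let α ∈ (0,1), 1/2 < β < α, and let sequences (f̂_ℓ), (ĝ_j) of complex numbers satisfy A² := Σ_j (1+|j|^{2β})|f̂_j|² < ∞ and B² := Σ_j (1+|j|^{2β})|ĝ_j|² < ∞. Then for every integer k, |Σ_ℓ (k-ℓ) f̂_ℓ ĝ_{k-ℓ}| ≤ C (1+|k|)^{1-β} A B for a constant C depending only on β. -/
lemma stmt3_key (β : ℝ) (hβ : 1/2 < β) (hβ1 : β < 1) (k m : ℤ) :
    |((m:ℤ):ℝ)| ≤ 2 * (1 + |(k:ℝ)|) ^ (1 - β) *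
      (Real.sqrt (1 + |((k - m : ℤ):ℝ)| ^ (2*β)) * Real.sqrt (1 + |((m:ℤ):ℝ)| ^ (2*β))) := by
  set M := |((m:ℤ):ℝ)| with hMdef
  set K := |(k:ℝ)| with hKdef
  set L := |((k - m : ℤ):ℝ)| with hLdef
  have hM0 : 0 ≤ M := abs_nonneg _
  have hK0 : 0 ≤ K := abs_nonneg _
  have hL0 : 0 ≤ L := abs_nonneg _
  have hβ0 : (0:ℝ) < β := by linarith
  have h1β : (0:ℝ) ≤ 1 - β := by linarith
  have hsqM : Real.sqrt (1 + M ^ (2*β)) ≥ M ^ β := by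
    rw [ge_iff_le, Real.le_sqrt (Real.rpow_nonneg hM0 _) (by positivity)]
    rw [← Real.rpow_natCast (M ^ β) 2, ← Real.rpow_mul hM0]
    push_cast
    rw [mul_comm β 2]
    linarith
  have hsqL : Real.sqrt (1 + L ^ (2*β)) ≥ L ^ β := by
    rw [ge_iff_le, Real.le_sqrt (Real.rpow_nonneg hL0 _) (by positivity)]
    rw [← Real.rpow_natCast (L ^ β) 2, ← Real.rpow_mul hL0]
    push_cast
    rw [mul_comm β 2]
    linarith
  have hsqM1 : (1:ℝ) ≤ Real.sqrt (1 + M ^ (2*β)) := by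
    rw [Real.one_le_sqrt]; nlinarith [Real.rpow_nonneg hM0 (2*β)]
  have hsqL1 : (1:ℝ) ≤ Real.sqrt (1 + L ^ (2*β)) := by
    rw [Real.one_le_sqrt]; nlinarith [Real.rpow_nonneg hL0 (2*β)]
  have hKpow1 : (1:ℝ) ≤ (1 + K) ^ (1 - β) :=
    Real.one_le_rpow (by linarith) h1β
  rcases eq_or_ne m 0 with hm | hm
  · subst hm
    simp only [Int.cast_zero, abs_zero] at hMdef
    rw [hMdef]
    positivity
  · have hM1 : (1:ℝ) ≤ M := by
      rw [hMdef]
      exact_mod_cast Int.one_le_abs hm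
    have hMpos : (0:ℝ) < M := by linarith
    rcases le_or_gt M (2 * K) with hcase | hcase
    · -- |m| ≤ 2|k|
      have hsplit : M = M ^ β * M ^ (1 - β) := by
        rw [← Real.rpow_add hMpos]; simp
      have h2 : M ^ (1 - β) ≤ 2 * (1 + K) ^ (1 - β) := by
        calc M ^ (1 - β) ≤ (2 * (1 + K)) ^ (1 - β) :=
              Real.rpow_le_rpow hM0 (by linarith) h1β
          _ = 2 ^ (1 - β) * (1 + K) ^ (1 - β) :=
              Real.mul_rpow (by norm_num) (by linarith)
          _ ≤ 2 * (1 + K) ^ (1 - β) := by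
              gcongr
              calc (2:ℝ) ^ (1 - β) ≤ 2 ^ (1:ℝ) :=
                    Real.rpow_le_rpow_of_exponent_le (by norm_num) (by linarith)
                _ = 2 := Real.rpow_one 2
      calc M = M ^ β * M ^ (1 - β) := hsplit
        _ ≤ Real.sqrt (1 + M ^ (2*β)) * (2 * (1 + K) ^ (1 - β)) := by
            apply mul_le_mul hsqM h2 (Real.rpow_nonneg hM0 _) (Real.sqrt_nonneg _)
        _ ≤ (Real.sqrt (1 + L ^ (2*β)) * Real.sqrt (1 + M ^ (2*β))) * (2 * (1 + K) ^ (1 - β)) := by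
            have h3 : Real.sqrt (1 + M ^ (2*β)) ≤ Real.sqrt (1 + L ^ (2*β)) * Real.sqrt (1 + M ^ (2*β)) :=
              le_mul_of_one_le_left (Real.sqrt_nonneg _) hsqL1
            exact mul_le_mul_of_nonneg_right h3 (by positivity)
        _ = 2 * (1 + K) ^ (1 - β) * (Real.sqrt (1 + L ^ (2*β)) * Real.sqrt (1 + M ^ (2*β))) := by ring
    · -- |m| > 2|k|, so L ≥ M/2
      have hLge : M / 2 ≤ L := by
        have : M - K ≤ L := by
          rw [hMdef, hKdef, hLdef]
          have := abs_sub_abs_le_abs_sub ((m:ℝ)) ((k:ℝ))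
          have h2 : |((k - m : ℤ):ℝ)| = |(m:ℝ) - (k:ℝ)| := by
            push_cast; rw [abs_sub_comm]
          rw [h2]; exact this
        linarith
      have hLpos : 0 < L := by linarith
      have hM2β : M ≤ M ^ (2*β) := by
        calc M = M ^ (1:ℝ) := (Real.rpow_one M).symm
          _ ≤ M ^ (2*β) := Real.rpow_le_rpow_of_exponent_le hM1 (by linarith)
      have hsplit : M ^ (2*β) = M ^ β * M ^ β := by
        rw [← Real.rpow_add hMpos]; ring_nf
      have hMβL : M ^ β ≤ 2 * L ^ β := by
        calc M ^ β ≤ (2 * L) ^ β := Real.rpow_le_rpow hM0 (by linarith) (le_of_lt hβ0)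
          _ = 2 ^ β * L ^ β := Real.mul_rpow (by norm_num) hL0
          _ ≤ 2 * L ^ β := by
              gcongr
              calc (2:ℝ) ^ β ≤ 2 ^ (1:ℝ) :=
                    Real.rpow_le_rpow_of_exponent_le (by norm_num) (by linarith)
                _ = 2 := Real.rpow_one 2
      have hMb0 : 0 ≤ M ^ β := Real.rpow_nonneg hM0 _
      have hLb0 : 0 ≤ L ^ β := Real.rpow_nonneg hL0 _
      calc M ≤ M ^ (2*β) := hM2β
        _ = M ^ β * M ^ β := hsplit
        _ ≤ (2 * L ^ β) * M ^ β := by nlinarith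
        _ ≤ 2 * (Real.sqrt (1 + L ^ (2*β)) * Real.sqrt (1 + M ^ (2*β))) := by
            nlinarith [Real.sqrt_nonneg (1 + L ^ (2*β)), Real.sqrt_nonneg (1 + M ^ (2*β))]
        _ ≤ 2 * (1 + K) ^ (1 - β) * (Real.sqrt (1 + L ^ (2*β)) * Real.sqrt (1 + M ^ (2*β))) := by
            nlinarith [Real.sqrt_nonneg (1 + L ^ (2*β)), Real.sqrt_nonneg (1 + M ^ (2*β)), mul_le_mul_of_nonneg_left hKpow1 (show (0:ℝ) ≤ 2 * (Real.sqrt (1 + L ^ (2*β)) * Real.sqrt (1 + M ^ (2*β))) by positivity)]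

/-- convolution-type estimate for weighted `ℓ²` sequences. If
`A² = Σ_j (1+|j|^{2β})|f̂_j|²` and `B² = Σ_j (1+|j|^{2β})|ĝ_j|²` are finite, with
`1/2 < β < α < 1`, then for every `k`,
`|Σ_ℓ (k-ℓ) f̂_ℓ ĝ_{k-ℓ}| ≤ C (1+|k|)^{1-β} A B` with `C = C(β)`. -/
theorem stmt3 (α β : ℝ) (hβ : 1/2 < β) (hβα : β < α) (hα : α < 1) :
    ∃ C > 0, ∀ f g : ℤ → ℂ,
      Summable (fun j : ℤ => (1 + |(j : ℝ)| ^ (2 * β)) * ‖f j‖ ^ 2) →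
      Summable (fun j : ℤ => (1 + |(j : ℝ)| ^ (2 * β)) * ‖g j‖ ^ 2) →
      ∀ k : ℤ,
        Summable (fun l : ℤ => ((k - l : ℤ) : ℂ) * f l * g (k - l)) ∧
        ‖∑' l : ℤ, ((k - l : ℤ) : ℂ) * f l * g (k - l)‖ ≤
          C * (1 + |(k : ℝ)|) ^ (1 - β) *
            Real.sqrt (∑' j : ℤ, (1 + |(j : ℝ)| ^ (2 * β)) * ‖f j‖ ^ 2) *
            Real.sqrt (∑' j : ℤ, (1 + |(j : ℝ)| ^ (2 * β)) * ‖g j‖ ^ 2) := by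
  have hβ1 : β < 1 := lt_trans hβα hα
  refine ⟨2, by norm_num, ?_⟩
  intro f g hf hg k
  set w : ℤ → ℝ := fun j => 1 + |(j : ℝ)| ^ (2 * β) with hw
  have hw0 : ∀ j, 0 ≤ w j := fun j => by
    have := Real.rpow_nonneg (abs_nonneg ((j:ℤ):ℝ)) (2*β); simp only [hw]; linarith
  set u : ℤ → ℝ := fun l => Real.sqrt (w l) * ‖f l‖ with hu
  set v : ℤ → ℝ := fun l => Real.sqrt (w (k - l)) * ‖g (k - l)‖ with hv
  have hu2 : ∀ l, u l ^ 2 = w l * ‖f l‖ ^ 2 := fun l => by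
    simp only [hu]; rw [mul_pow, Real.sq_sqrt (hw0 l)]
  have hv2 : ∀ l, v l ^ 2 = w (k - l) * ‖g (k - l)‖ ^ 2 := fun l => by
    simp only [hv]; rw [mul_pow, Real.sq_sqrt (hw0 _)]
  have hu0 : ∀ l, 0 ≤ u l := fun l => mul_nonneg (Real.sqrt_nonneg _) (norm_nonneg _)
  have hv0 : ∀ l, 0 ≤ v l := fun l => mul_nonneg (Real.sqrt_nonneg _) (norm_nonneg _)
  have hufsum : Summable (fun l => u l ^ 2) := by simp_rw [hu2]; exact hf
  have hvsum : Summable (fun l => v l ^ 2) := by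
    simp_rw [hv2]
    exact ((Equiv.subLeft k).summable_iff (f := fun j => w j * ‖g j‖ ^ 2)).2 hg
  set X : ℝ := (1 + |(k : ℝ)|) ^ (1 - β) with hX
  have hX0 : 0 ≤ X := Real.rpow_nonneg (by positivity) _
  have hptw : ∀ l, ‖((k - l : ℤ) : ℂ) * f l * g (k - l)‖ ≤ 2 * X * (u l * v l) := by
    intro l
    have hkey := stmt3_key β hβ hβ1 k (k - l)
    rw [sub_sub_cancel] at hkey
    have hnorm : ‖((k - l : ℤ) : ℂ)‖ = |((k - l : ℤ) : ℝ)| := by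
      rw [Complex.norm_intCast]
    calc ‖((k - l : ℤ) : ℂ) * f l * g (k - l)‖
        = |((k - l : ℤ) : ℝ)| * ‖f l‖ * ‖g (k - l)‖ := by
          rw [norm_mul, norm_mul, hnorm]
      _ ≤ (2 * X * (Real.sqrt (w l) * Real.sqrt (w (k - l)))) * ‖f l‖ * ‖g (k - l)‖ := by
          gcongr
      _ = 2 * X * (u l * v l) := by simp only [hu, hv]; ring
  have huv : Summable (fun l => u l * v l) := by
    apply Summable.of_nonneg_of_le (fun l => mul_nonneg (hu0 l) (hv0 l))
      (fun l => ?_) ((hufsum.add hvsum).div_const 2)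
    nlinarith [sq_nonneg (u l - v l)]
  have hsumnorm : Summable (fun l => ‖((k - l : ℤ) : ℂ) * f l * g (k - l)‖) :=
    Summable.of_nonneg_of_le (fun l => norm_nonneg _) hptw (huv.mul_left (2 * X))
  have hS : Summable (fun l : ℤ => ((k - l : ℤ) : ℂ) * f l * g (k - l)) :=
    hsumnorm.of_norm
  refine ⟨hS, ?_⟩
  set A : ℝ := Real.sqrt (∑' j : ℤ, w j * ‖f j‖ ^ 2) with hA
  set B : ℝ := Real.sqrt (∑' j : ℤ, w j * ‖g j‖ ^ 2) with hB
  have hA0 : 0 ≤ A := Real.sqrt_nonneg _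
  have hB0 : 0 ≤ B := Real.sqrt_nonneg _
  have hA2 : A ^ 2 = ∑' l, u l ^ 2 := by
    simp_rw [hu2]; exact Real.sq_sqrt (tsum_nonneg fun j => mul_nonneg (hw0 j) (sq_nonneg _))
  have hB2 : B ^ 2 = ∑' l, v l ^ 2 := by
    simp_rw [hv2]
    rw [Real.sq_sqrt (tsum_nonneg fun j => mul_nonneg (hw0 j) (sq_nonneg _))]
    exact ((Equiv.subLeft k).tsum_eq (f := fun j => w j * ‖g j‖ ^ 2)).symm
  have hCS : ∑' l, u l * v l ≤ A * B := by
    apply Summable.tsum_le_of_sum_le huv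
    intro s
    have h1 := Finset.sum_mul_sq_le_sq_mul_sq s u v
    have h2 : ∑ i ∈ s, u i ^ 2 ≤ A ^ 2 := by
      rw [hA2]; exact Summable.sum_le_tsum s (fun i _ => sq_nonneg _) hufsum
    have h3 : ∑ i ∈ s, v i ^ 2 ≤ B ^ 2 := by
      rw [hB2]; exact Summable.sum_le_tsum s (fun i _ => sq_nonneg _) hvsum
    have hs0 : 0 ≤ ∑ i ∈ s, u i * v i :=
      Finset.sum_nonneg fun i _ => mul_nonneg (hu0 i) (hv0 i)
    nlinarith [Finset.sum_nonneg (fun i (_ : i ∈ s) => sq_nonneg (u i)),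
      Finset.sum_nonneg (fun i (_ : i ∈ s) => sq_nonneg (v i)), mul_nonneg hA0 hB0]
  calc ‖∑' l : ℤ, ((k - l : ℤ) : ℂ) * f l * g (k - l)‖
      ≤ ∑' l, ‖((k - l : ℤ) : ℂ) * f l * g (k - l)‖ := norm_tsum_le_tsum_norm hsumnorm
    _ ≤ ∑' l, 2 * X * (u l * v l) := Summable.tsum_le_tsum hptw hsumnorm (huv.mul_left _)
    _ = 2 * X * ∑' l, u l * v l := tsum_mul_left
    _ ≤ 2 * X * (A * B) := by
        apply mul_le_mul_of_nonneg_left hCS (by positivity)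
    _ = 2 * X * A * B := by ring
end

section
/- Let 0 ≤ s ≤ r and f : U → ℝ be a bounded function on a convex set U ⊂ ℝⁿ with finite Hölder seminorm [f]_r. Then [f]_s ≤ C ‖f‖_0^{1-s/r} [f]_r^{s/r} for a constant C depending only on n, r, s. -/
/-- Sup norm of `f` over a set `U`. -/
noncomputable def supNormOn (n : ℕ) (U : Set (Fin n → ℝ)) (f : (Fin n → ℝ) → ℝ) : ℝ :=
  sSup {y : ℝ | ∃ x ∈ U, y = |f x|}

/-- Hölder seminorm `[f]_t` of `f` over a set `U` (the quotient is read as `0` when `x = z`). -/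
noncomputable def holderSemiOn (n : ℕ) (t : ℝ) (U : Set (Fin n → ℝ))
    (f : (Fin n → ℝ) → ℝ) : ℝ :=
  sSup {y : ℝ | ∃ x ∈ U, ∃ z ∈ U, x ≠ z ∧ y = |f x - f z| / ‖x - z‖ ^ t}

/-- interpolation inequality for Hölder seminorms: for `0 ≤ s ≤ r ≤ 1`,
`r > 0`, and a bounded `f` on a convex `U ⊆ ℝⁿ` with finite `[f]_r`, one has
`[f]_s ≤ C ‖f‖₀^{1-s/r} [f]_r^{s/r}` with `C = C(n, r, s)`. -/
theorem stmt4 (n : ℕ) (r s : ℝ) (hs : 0 ≤ s) (hsr : s ≤ r) (hr0 : 0 < r) (hr1 : r ≤ 1) :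
    ∃ C > 0, ∀ (U : Set (Fin n → ℝ)) (f : (Fin n → ℝ) → ℝ), Convex ℝ U →
      (∃ M : ℝ, ∀ x ∈ U, |f x| ≤ M) →
      (∃ K : ℝ, ∀ x ∈ U, ∀ z ∈ U, |f x - f z| ≤ K * ‖x - z‖ ^ r) →
      holderSemiOn n s U f ≤
        C * supNormOn n U f ^ (1 - s / r) * holderSemiOn n r U f ^ (s / r) := by
  refine ⟨2, two_pos, ?_⟩
  rintro U f hU ⟨M, hM⟩ ⟨K', hK'⟩
  set θ := s / r with hθdef
  have hθ0 : 0 ≤ θ := div_nonneg hs hr0.le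
  have hθ1 : θ ≤ 1 := (div_le_one hr0).mpr hsr
  have hrθ : r * θ = s := by
    rw [hθdef, mul_comm, div_mul_cancel₀ _ hr0.ne']
  set M₀ := supNormOn n U f with hM₀def
  set K := holderSemiOn n r U f with hKdef
  have hM₀0 : 0 ≤ M₀ := Real.sSup_nonneg (by rintro y ⟨x, hx, rfl⟩; positivity)
  have hK0 : 0 ≤ K := Real.sSup_nonneg (by rintro y ⟨x, hx, z, hz, hxz, rfl⟩; positivity)
  have hM₀le : ∀ x ∈ U, |f x| ≤ M₀ := fun x hx =>
    le_csSup ⟨M, by rintro y ⟨x', hx', rfl⟩; exact hM x' hx'⟩ ⟨x, hx, rfl⟩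
  have hKle : ∀ x ∈ U, ∀ z ∈ U, |f x - f z| ≤ K * ‖x - z‖ ^ r := by
    intro x hx z hz
    by_cases hxz : x = z
    · simp [hxz, Real.zero_rpow hr0.ne']
    · have hd : 0 < ‖x - z‖ := by rwa [norm_pos_iff, sub_ne_zero]
      have hdr : 0 < ‖x - z‖ ^ r := Real.rpow_pos_of_pos hd r
      have hmem : |f x - f z| / ‖x - z‖ ^ r ≤ K := by
        refine le_csSup ⟨K', ?_⟩ ⟨x, hx, z, hz, hxz, rfl⟩
        rintro y ⟨a, ha, b, hb, hab, rfl⟩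
        have hd' : 0 < ‖a - b‖ := by rwa [norm_pos_iff, sub_ne_zero]
        have hdr' : 0 < ‖a - b‖ ^ r := Real.rpow_pos_of_pos hd' r
        exact (div_le_iff₀ hdr').mpr (hK' a ha b hb)
      exact (div_le_iff₀ hdr).mp hmem
  refine Real.sSup_le ?_ (by positivity)
  rintro y ⟨x, hx, z, hz, hxz, rfl⟩
  have hd : 0 < ‖x - z‖ := by rwa [norm_pos_iff, sub_ne_zero]
  set d := ‖x - z‖ with hddef
  have h1 : |f x - f z| ≤ 2 * M₀ := by
    calc |f x - f z| ≤ |f x| + |f z| := abs_sub _ _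
      _ ≤ M₀ + M₀ := add_le_add (hM₀le x hx) (hM₀le z hz)
      _ = 2 * M₀ := by ring
  have h2 : |f x - f z| ≤ K * d ^ r := hKle x hx z hz
  have hdr0 : 0 ≤ K * d ^ r := by positivity
  set m := min (2 * M₀) (K * d ^ r) with hmdef
  have hm0 : 0 ≤ m := le_min (by positivity) hdr0
  have hmsplit : m = m ^ (1 - θ) * m ^ θ := by
    rw [← Real.rpow_add_of_nonneg hm0 (by linarith) hθ0, sub_add_cancel, Real.rpow_one]
  have hkey : |f x - f z| ≤ (2 * M₀) ^ (1 - θ) * (K * d ^ r) ^ θ := by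
    calc |f x - f z| ≤ m := le_min h1 h2
      _ = m ^ (1 - θ) * m ^ θ := hmsplit
      _ ≤ (2 * M₀) ^ (1 - θ) * (K * d ^ r) ^ θ :=
          mul_le_mul (Real.rpow_le_rpow hm0 (min_le_left _ _) (by linarith))
            (Real.rpow_le_rpow hm0 (min_le_right _ _) hθ0)
            (Real.rpow_nonneg hm0 θ) (Real.rpow_nonneg (by positivity) _)
  have hrw : (2 * M₀) ^ (1 - θ) * (K * d ^ r) ^ θ
      = 2 ^ (1 - θ) * M₀ ^ (1 - θ) * (K ^ θ * d ^ s) := by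
    rw [Real.mul_rpow (by norm_num) hM₀0, Real.mul_rpow hK0 (by positivity),
      ← Real.rpow_mul hd.le, hrθ]
  have hds : 0 < d ^ s := Real.rpow_pos_of_pos hd s
  rw [div_le_iff₀ hds]
  calc |f x - f z| ≤ 2 ^ (1 - θ) * M₀ ^ (1 - θ) * (K ^ θ * d ^ s) := hrw ▸ hkey
    _ ≤ 2 * M₀ ^ (1 - θ) * (K ^ θ * d ^ s) := by
        have h2le : (2:ℝ) ^ (1 - θ) ≤ 2 := by
          calc (2:ℝ) ^ (1 - θ) ≤ 2 ^ (1:ℝ) :=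
              Real.rpow_le_rpow_of_exponent_le one_le_two (by linarith)
            _ = 2 := Real.rpow_one 2
        exact mul_le_mul_of_nonneg_right
          (mul_le_mul_of_nonneg_right h2le (Real.rpow_nonneg hM₀0 _)) (by positivity)
    _ = 2 * M₀ ^ (1 - θ) * K ^ θ * d ^ s := by ring
end

section
/- Let φ be a standard mollifier on ℝⁿ (smooth, nonnegative, supported in the unit ball, with integral 1), φ_ℓ(x) = ℓ^{-n}φ(x/ℓ), and let f, g : ℝⁿ → ℝ be bounded functions of class C^α for some 0 < α ≤ 1. Then ‖(fg)∗φ_ℓ − (f∗φ_ℓ)(g∗φ_ℓ)‖_0 ≤ C ℓ^{2α} ‖f‖_{C^α} ‖g‖_{C^α}, with C depending only on n, α, φ. -/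
open MeasureTheory

/-- Rescaled mollifier `φ_ℓ(x) = ℓ^{-n} φ(x/ℓ)`. -/
noncomputable def mollK (n : ℕ) (φ : EuclideanSpace ℝ (Fin n) → ℝ) (ℓ : ℝ)
    (y : EuclideanSpace ℝ (Fin n)) : ℝ :=
  (ℓ ^ n)⁻¹ * φ (ℓ⁻¹ • y)

/-- Convolution `(f ∗ k)(x) = ∫ f(x-y) k(y) dy`. -/
noncomputable def convWith (n : ℕ) (f k : EuclideanSpace ℝ (Fin n) → ℝ)
    (x : EuclideanSpace ℝ (Fin n)) : ℝ :=
  ∫ y, f (x - y) * k y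

/-- Hölder norm `‖f‖_{C^α} = ‖f‖₀ + sup_{x≠y} |f x - f y|/‖x-y‖^α` on `ℝⁿ`. -/
noncomputable def holderNormE (n : ℕ) (α : ℝ) (f : EuclideanSpace ℝ (Fin n) → ℝ) : ℝ :=
  (⨆ x : EuclideanSpace ℝ (Fin n), |f x|) +
    ⨆ p : {p : EuclideanSpace ℝ (Fin n) × EuclideanSpace ℝ (Fin n) // p.1 ≠ p.2},
      |f p.1.1 - f p.1.2| / ‖p.1.1 - p.1.2‖ ^ α

/-- A function satisfying a Hölder bound (with `α > 0`) is continuous. -/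
lemma holder_cont (n : ℕ) (α : ℝ) (hα0 : 0 < α) (f : EuclideanSpace ℝ (Fin n) → ℝ)
    (K : ℝ) (hK : 0 ≤ K) (h : ∀ x y, |f x - f y| ≤ K * ‖x - y‖ ^ α) : Continuous f := by
  rw [continuous_iff_continuousAt]
  intro a
  rw [ContinuousAt, tendsto_iff_dist_tendsto_zero]
  have h1 : Filter.Tendsto (fun y : EuclideanSpace ℝ (Fin n) => K * ‖y - a‖ ^ α)
      (nhds a) (nhds 0) := by
    have hn : Filter.Tendsto (fun y : EuclideanSpace ℝ (Fin n) => ‖y - a‖)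
        (nhds a) (nhds 0) := tendsto_norm_sub_self a
    have hr : Filter.Tendsto (fun t : ℝ => K * t ^ α) (nhds 0) (nhds 0) := by
      have hc : ContinuousAt (fun t : ℝ => t ^ α) 0 :=
        Real.continuousAt_rpow_const 0 α (Or.inr hα0.le)
      have := (hc.tendsto).const_mul K
      simpa [Real.zero_rpow (ne_of_gt hα0)] using this
    exact hr.comp hn
  refine squeeze_zero (fun y => dist_nonneg) (fun y => ?_) h1
  rw [Real.dist_eq]
  exact h y a

/-- Bounds from the Hölder norm. -/
lemma holderNormE_bounds (n : ℕ) (α : ℝ) (hα0 : 0 < α) (f : EuclideanSpace ℝ (Fin n) → ℝ)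
    (M : ℝ) (hM : ∀ x, |f x| ≤ M) (K : ℝ) (hK : ∀ x y, |f x - f y| ≤ K * ‖x - y‖ ^ α) :
    (∀ x, |f x| ≤ holderNormE n α f) ∧
    (∀ x y, |f x - f y| ≤ holderNormE n α f * ‖x - y‖ ^ α) ∧ 0 ≤ holderNormE n α f := by
  set K' := max K 0 with hK'def
  have hK'0 : 0 ≤ K' := le_max_right _ _
  have hK' : ∀ x y, |f x - f y| ≤ K' * ‖x - y‖ ^ α := fun x y =>
    (hK x y).trans (mul_le_mul_of_nonneg_right (le_max_left _ _)
      (Real.rpow_nonneg (norm_nonneg _) _))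
  set S1 := ⨆ x : EuclideanSpace ℝ (Fin n), |f x| with hS1
  set S2 := ⨆ p : {p : EuclideanSpace ℝ (Fin n) × EuclideanSpace ℝ (Fin n) // p.1 ≠ p.2},
      |f p.1.1 - f p.1.2| / ‖p.1.1 - p.1.2‖ ^ α with hS2
  have hS1nn : 0 ≤ S1 := Real.iSup_nonneg fun x => abs_nonneg _
  have hS2nn : 0 ≤ S2 := Real.iSup_nonneg fun p => div_nonneg (abs_nonneg _)
    (Real.rpow_nonneg (norm_nonneg _) _)
  have hbdd1 : BddAbove (Set.range fun x : EuclideanSpace ℝ (Fin n) => |f x|) :=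
    ⟨M, by rintro _ ⟨x, rfl⟩; exact hM x⟩
  have hbdd2 : BddAbove (Set.range fun p :
      {p : EuclideanSpace ℝ (Fin n) × EuclideanSpace ℝ (Fin n) // p.1 ≠ p.2} =>
      |f p.1.1 - f p.1.2| / ‖p.1.1 - p.1.2‖ ^ α) := by
    refine ⟨K', ?_⟩
    rintro _ ⟨p, rfl⟩
    have hne : p.1.1 - p.1.2 ≠ 0 := sub_ne_zero.2 p.2
    have hpos : (0:ℝ) < ‖p.1.1 - p.1.2‖ ^ α :=
      Real.rpow_pos_of_pos (norm_pos_iff.2 hne) _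
    rw [div_le_iff₀ hpos]
    exact hK' _ _
  have h1 : ∀ x, |f x| ≤ holderNormE n α f := by
    intro x
    have : |f x| ≤ S1 := le_ciSup hbdd1 x
    calc |f x| ≤ S1 := this
      _ ≤ S1 + S2 := le_add_of_nonneg_right hS2nn
  have h2 : ∀ x y, |f x - f y| ≤ holderNormE n α f * ‖x - y‖ ^ α := by
    intro x y
    rcases eq_or_ne x y with rfl | hxy
    · simp only [sub_self, abs_zero, norm_zero, Real.zero_rpow hα0.ne', mul_zero, le_refl]
    · have hpos : (0:ℝ) < ‖x - y‖ ^ α :=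
        Real.rpow_pos_of_pos (norm_pos_iff.2 (sub_ne_zero.2 hxy)) _
      have hq : |f x - f y| / ‖x - y‖ ^ α ≤ S2 :=
        le_ciSup hbdd2 ⟨(x, y), hxy⟩
      have : |f x - f y| ≤ S2 * ‖x - y‖ ^ α := by
        rw [← div_le_iff₀ hpos]; exact hq
      calc |f x - f y| ≤ S2 * ‖x - y‖ ^ α := this
        _ ≤ (S1 + S2) * ‖x - y‖ ^ α :=
          mul_le_mul_of_nonneg_right (by linarith) hpos.le
  exact ⟨h1, h2, add_nonneg hS1nn hS2nn⟩

/-- quadratic commutator estimate: for a standard mollifier `φ` on `ℝⁿ`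
and bounded `C^α` functions `f, g` (`0 < α ≤ 1`),
`‖(fg)∗φ_ℓ − (f∗φ_ℓ)(g∗φ_ℓ)‖₀ ≤ C ℓ^{2α} ‖f‖_{C^α} ‖g‖_{C^α}`, `C = C(n, α, φ)`. -/
theorem stmt5 (n : ℕ) (α : ℝ) (hα0 : 0 < α) (hα1 : α ≤ 1)
    (φ : EuclideanSpace ℝ (Fin n) → ℝ) (hφsm : ContDiff ℝ (⊤ : ℕ∞) φ) (hφ0 : ∀ x, 0 ≤ φ x)
    (hφsupp : tsupport φ ⊆ Metric.closedBall 0 1) (hφint : ∫ x, φ x = 1) :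
    ∃ C > 0, ∀ (f g : EuclideanSpace ℝ (Fin n) → ℝ) (ℓ : ℝ), 0 < ℓ →
      (∃ M, ∀ x, |f x| ≤ M) → (∃ K, ∀ x y, |f x - f y| ≤ K * ‖x - y‖ ^ α) →
      (∃ M, ∀ x, |g x| ≤ M) → (∃ K, ∀ x y, |g x - g y| ≤ K * ‖x - y‖ ^ α) →
      ∀ x,
        |convWith n (fun y => f y * g y) (mollK n φ ℓ) x -
            convWith n f (mollK n φ ℓ) x * convWith n g (mollK n φ ℓ) x| ≤
          C * ℓ ^ (2 * α) * holderNormE n α f * holderNormE n α g := by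
  refine ⟨(4:ℝ) ^ α, Real.rpow_pos_of_pos (by norm_num) α, ?_⟩
  rintro f g ℓ hℓ ⟨Mf, hMf⟩ ⟨Kf, hKf⟩ ⟨Mg, hMg⟩ ⟨Kg, hKg⟩ x
  -- Hölder norm facts
  obtain ⟨hf0, hfH, hfnn⟩ := holderNormE_bounds n α hα0 f Mf hMf Kf hKf
  obtain ⟨hg0, hgH, hgnn⟩ := holderNormE_bounds n α hα0 g Mg hMg Kg hKg
  set Hf := holderNormE n α f
  set Hg := holderNormE n α g
  -- continuity of f, g
  have hfc : Continuous f := holder_cont n α hα0 f Hf hfnn hfH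
  have hgc : Continuous g := holder_cont n α hα0 g Hg hgnn hgH
  -- kernel facts
  set k := mollK n φ ℓ with hkdef
  have hk0 : ∀ y, 0 ≤ k y := fun y =>
    mul_nonneg (inv_nonneg.2 (pow_nonneg hℓ.le n)) (hφ0 _)
  have hkc : Continuous k := by
    exact continuous_const.mul (hφsm.continuous.comp (continuous_const_smul ℓ⁻¹))
  have hksupp : ∀ y, k y ≠ 0 → ‖y‖ ≤ ℓ := by
    intro y hy
    have hφy : φ (ℓ⁻¹ • y) ≠ 0 := by
      intro h; apply hy; simp [hkdef, mollK, h]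
    have : ℓ⁻¹ • y ∈ tsupport φ := subset_closure (by simpa [Function.mem_support] using hφy)
    have := hφsupp this
    rw [Metric.mem_closedBall, dist_zero_right, norm_smul] at this
    rw [Real.norm_eq_abs, abs_of_pos (inv_pos.2 hℓ)] at this
    calc ‖y‖ = ℓ * (ℓ⁻¹ * ‖y‖) := by field_simp
      _ ≤ ℓ * 1 := mul_le_mul_of_nonneg_left this hℓ.le
      _ = ℓ := mul_one ℓ
  have hkcs : HasCompactSupport k := by
    have hsub : tsupport k ⊆ Metric.closedBall 0 ℓ := by
      apply closure_minimal _ Metric.isClosed_closedBall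
      intro y hy
      rw [Metric.mem_closedBall, dist_zero_right]
      exact hksupp y hy
    exact IsCompact.of_isClosed_subset (isCompact_closedBall 0 ℓ) (isClosed_tsupport _) hsub
  have hkint : Integrable k := hkc.integrable_of_hasCompactSupport hkcs
  have hkI : ∫ y, k y = 1 := by
    have hsc : ∫ y, φ (ℓ⁻¹ • y) = ℓ ^ n * ∫ y, φ y := by
      rw [Measure.integral_comp_smul volume φ ℓ⁻¹]
      rw [finrank_euclideanSpace_fin, smul_eq_mul, inv_pow, inv_inv, abs_pow, abs_of_pos hℓ]
    have hℓn : (ℓ:ℝ) ^ n ≠ 0 := pow_ne_zero n hℓ.ne'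
    calc ∫ y, k y = ∫ y, (ℓ ^ n)⁻¹ * φ (ℓ⁻¹ • y) := rfl
      _ = (ℓ ^ n)⁻¹ * ∫ y, φ (ℓ⁻¹ • y) := integral_const_mul _ _
      _ = 1 := by rw [hsc, hφint]; field_simp
  -- integrability helper
  have hint : ∀ h : EuclideanSpace ℝ (Fin n) → ℝ, Continuous h →
      Integrable (fun y => h (x - y) * k y) := by
    intro h hc
    have hcont : Continuous fun y => h (x - y) * k y :=
      (hc.comp (continuous_const.sub continuous_id)).mul hkc
    apply hcont.integrable_of_hasCompactSupport
    exact (HasCompactSupport.mul_left hkcs : HasCompactSupport fun y => h (x - y) * k y)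
  set A := convWith n f k x with hA
  set B := convWith n g k x with hB
  -- pointwise estimate for f and g against their mollifications
  have key : ∀ (h : EuclideanSpace ℝ (Fin n) → ℝ) (H : ℝ), 0 ≤ H → Continuous h →
      (∀ z w, |h z - h w| ≤ H * ‖z - w‖ ^ α) →
      ∀ y, k y ≠ 0 → |h (x - y) - convWith n h k x| ≤ H * (2 * ℓ) ^ α := by
    intro h H hHnn hc hH y hky
    have hinth : Integrable (fun z => h (x - z) * k z) := hint h hc
    have hintc : Integrable (fun z => h (x - y) * k z) := hkint.const_mul _
    have heq : h (x - y) - convWith n h k x = ∫ z, (h (x - y) - h (x - z)) * k z := by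
      have : (fun z => (h (x - y) - h (x - z)) * k z)
          = fun z => h (x - y) * k z - h (x - z) * k z := by
        funext z; ring
      rw [this, integral_sub hintc hinth, integral_const_mul, hkI, mul_one]
      rfl
    rw [heq]
    have hbd : ∀ z, |(h (x - y) - h (x - z)) * k z| ≤ (H * (2 * ℓ) ^ α) * k z := by
      intro z
      rcases eq_or_ne (k z) 0 with hz | hz
      · simp [hz]
      · rw [abs_mul, abs_of_nonneg (hk0 z)]
        apply mul_le_mul_of_nonneg_right _ (hk0 z)
        have h1 : |h (x - y) - h (x - z)| ≤ H * ‖(x - y) - (x - z)‖ ^ α := hH _ _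
        have h2 : ‖(x - y) - (x - z)‖ ≤ 2 * ℓ := by
          have : (x - y) - (x - z) = z - y := by abel
          rw [this]
          calc ‖z - y‖ ≤ ‖z‖ + ‖y‖ := norm_sub_le _ _
            _ ≤ ℓ + ℓ := add_le_add (hksupp z hz) (hksupp y hky)
            _ = 2 * ℓ := by ring
        calc |h (x - y) - h (x - z)| ≤ H * ‖(x - y) - (x - z)‖ ^ α := h1
          _ ≤ H * (2 * ℓ) ^ α := mul_le_mul_of_nonneg_left
            (Real.rpow_le_rpow (norm_nonneg _) h2 hα0.le) hHnn
    have hintd : Integrable (fun z => (h (x - y) - h (x - z)) * k z) := by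
      have : (fun z => (h (x - y) - h (x - z)) * k z)
          = fun z => h (x - y) * k z - h (x - z) * k z := by
        funext z; ring
      rw [this]; exact hintc.sub hinth
    calc |∫ z, (h (x - y) - h (x - z)) * k z| ≤ ∫ z, |(h (x - y) - h (x - z)) * k z| :=
          by
            simpa only [Real.norm_eq_abs] using norm_integral_le_integral_norm (μ := volume) (fun z => (h (x - y) - h (x - z)) * k z)
      _ ≤ ∫ z, (H * (2 * ℓ) ^ α) * k z :=
          integral_mono hintd.abs (hkint.const_mul _) hbd
      _ = (H * (2 * ℓ) ^ α) * ∫ z, k z := integral_const_mul _ _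
      _ = H * (2 * ℓ) ^ α := by rw [hkI, mul_one]
  have keyf := key f Hf hfnn hfc hfH
  have keyg := key g Hg hgnn hgc hgH
  -- the commutator identity
  have hintf := hint f hfc
  have hintg := hint g hgc
  have hintfg := hint (fun y => f y * g y) (hfc.mul hgc)
  have hintprod : Integrable (fun y => (f (x - y) - A) * (g (x - y) - B) * k y) := by
    have : (fun y => (f (x - y) - A) * (g (x - y) - B) * k y)
        = fun y => (f (x - y) * g (x - y)) * k y - A * (g (x - y) * k y)
          - B * (f (x - y) * k y) + (A * B) * k y := by
      funext y; ring
    rw [this]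
    exact (((hintfg).sub (hintg.const_mul A)).sub (hintf.const_mul B)).add (hkint.const_mul _)
  have hid : convWith n (fun y => f y * g y) k x - A * B
      = ∫ y, (f (x - y) - A) * (g (x - y) - B) * k y := by
    have hexp : (fun y => (f (x - y) - A) * (g (x - y) - B) * k y)
        = fun y => (f (x - y) * g (x - y)) * k y - A * (g (x - y) * k y)
          - B * (f (x - y) * k y) + (A * B) * k y := by
      funext y; ring
    have i0 : Integrable (fun y => f (x - y) * g (x - y) * k y) := hintfg
    have i1 : Integrable (fun y => A * (g (x - y) * k y)) := hintg.const_mul A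
    have i2 : Integrable (fun y => B * (f (x - y) * k y)) := hintf.const_mul B
    have i3 : Integrable (fun y => A * B * k y) := hkint.const_mul _
    have i01 : Integrable
        (fun y => f (x - y) * g (x - y) * k y - A * (g (x - y) * k y)) := i0.sub i1
    have i012 : Integrable (fun y =>
        f (x - y) * g (x - y) * k y - A * (g (x - y) * k y) - B * (f (x - y) * k y)) :=
      i01.sub i2
    rw [hexp, integral_add i012 i3, integral_sub i01 i2, integral_sub i0 i1,
      integral_const_mul, integral_const_mul, integral_const_mul, hkI]
    have h1 : ∫ y, f (x - y) * k y = A := rfl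
    have h2 : ∫ y, g (x - y) * k y = B := rfl
    have h3 : convWith n (fun y => f y * g y) k x = ∫ y, (f (x - y) * g (x - y)) * k y := rfl
    rw [h1, h2, h3]; ring
  rw [hid]
  -- final estimate
  have hbd2 : ∀ y, |(f (x - y) - A) * (g (x - y) - B) * k y|
      ≤ ((Hf * (2 * ℓ) ^ α) * (Hg * (2 * ℓ) ^ α)) * k y := by
    intro y
    rcases eq_or_ne (k y) 0 with hz | hz
    · simp [hz]
    · rw [abs_mul, abs_mul, abs_of_nonneg (hk0 y)]
      apply mul_le_mul_of_nonneg_right _ (hk0 y)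
      have hfy := keyf y hz
      have hgy := keyg y hz
      exact mul_le_mul hfy hgy (abs_nonneg _)
        (mul_nonneg hfnn (Real.rpow_nonneg (by positivity) _))
  have hfinal : |∫ y, (f (x - y) - A) * (g (x - y) - B) * k y|
      ≤ (Hf * (2 * ℓ) ^ α) * (Hg * (2 * ℓ) ^ α) := by
    calc |∫ y, (f (x - y) - A) * (g (x - y) - B) * k y|
        ≤ ∫ y, |(f (x - y) - A) * (g (x - y) - B) * k y| := by
            simpa only [Real.norm_eq_abs] using norm_integral_le_integral_norm (μ := volume) (fun y => (f (x - y) - A) * (g (x - y) - B) * k y)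
      _ ≤ ∫ y, ((Hf * (2 * ℓ) ^ α) * (Hg * (2 * ℓ) ^ α)) * k y :=
          integral_mono hintprod.abs (hkint.const_mul _) hbd2
      _ = ((Hf * (2 * ℓ) ^ α) * (Hg * (2 * ℓ) ^ α)) * ∫ y, k y := integral_const_mul _ _
      _ = (Hf * (2 * ℓ) ^ α) * (Hg * (2 * ℓ) ^ α) := by rw [hkI, mul_one]
  refine hfinal.trans (le_of_eq ?_)
  have h2ℓ : (0:ℝ) < 2 * ℓ := by linarith
  have e1 : ((2:ℝ) * ℓ) ^ α = 2 ^ α * ℓ ^ α :=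
    Real.mul_rpow (by norm_num) hℓ.le
  have e2 : (ℓ:ℝ) ^ (2 * α) = ℓ ^ α * ℓ ^ α := by
    rw [two_mul, Real.rpow_add hℓ]
  have e3 : ((4:ℝ)) ^ α = 2 ^ α * 2 ^ α := by
    rw [← Real.mul_rpow (by norm_num) (by norm_num)]
    norm_num
  rw [e1, e2, e3]; ring
end

section
/- Let g₀ be a symmetric positive definite n×n matrix. There exist r > 0, unit vectors ν₁,…,ν_{n*} ∈ S^{n-1} with n* = n(n+1)/2, and linear maps L₁,…,L_{n*} : Sym_n → ℝ such that every symmetric matrix g satisfies g = Σ_k L_k(g) ν_k ⊗ ν_k, and moreover L_k(g) > r for every k whenever |g − g₀| < r. -/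
open Matrix

section Stmt8AuxSection
open Finset

namespace Stmt8Aux

variable {n : ℕ}

/-- unnormalized primitive vector `e_i + e_j` -/
def wv (i j : Fin n) : Fin n → ℝ := fun t => (if t = i then 1 else 0) + (if t = j then 1 else 0)

theorem wv_symm (i j : Fin n) : wv j i = wv i j := by
  funext t; simp [wv, add_comm]

theorem core_entry (h : Matrix (Fin n) (Fin n) ℝ) (hs : h.IsSymm) (a b : Fin n) :
    h a b = ∑ i : Fin n, ∑ j : Fin n,
      (h i j / 2 - if i = j then (∑ k, h i k)/4 else 0) *
        (((if a = i then (1:ℝ) else 0) + (if a = j then 1 else 0)) *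
         ((if b = i then (1:ℝ) else 0) + (if b = j then 1 else 0))) := by
  have hsym : ∀ i j, h j i = h i j := hs.apply
  simp only [sub_mul, mul_add, add_mul, ite_mul, mul_ite, mul_one, mul_zero, zero_mul, one_mul,
    Finset.sum_sub_distrib, Finset.sum_add_distrib, Finset.sum_ite_eq, Finset.sum_ite_eq',
    Finset.mem_univ, if_true, zero_add, add_zero, ite_add_ite]
  rw [Finset.sum_comm]
  by_cases hab : a = b
  · subst hab
    simp only [if_pos rfl, Finset.sum_ite_eq, Finset.sum_ite_eq', Finset.mem_univ, if_true,
      Finset.sum_add_distrib, Finset.sum_sub_distrib]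
    have e : (∑ x : Fin n, h x a / 2) = (∑ x : Fin n, h a x / 2) :=
      Finset.sum_congr rfl (fun x _ => by rw [hsym a x])
    rw [e]; simp only [← Finset.sum_div]
    ring
  · simp only [if_neg hab, if_neg (fun hh : b = a => hab hh.symm), Finset.sum_ite_eq,
      Finset.sum_ite_eq', Finset.mem_univ, if_true, Finset.sum_const_zero, add_zero, zero_add]
    rw [hsym b a]
    ring

theorem core_mat (h : Matrix (Fin n) (Fin n) ℝ) (hs : h.IsSymm) :
    h = ∑ i : Fin n, ∑ j : Fin n,
      (h i j / 2 - if i = j then (∑ k, h i k)/4 else 0) • vecMulVec (wv i j) (wv i j) := by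
  ext a b
  rw [core_entry h hs a b]
  simp only [Matrix.sum_apply, Matrix.smul_apply, vecMulVec_apply, smul_eq_mul, wv]

theorem sum_pairs {M : Type*} [AddCommMonoid M] (f : Fin n × Fin n → M)
    (hf : ∀ p : Fin n × Fin n, f p.swap = f p) :
    ∑ p : Fin n × Fin n, f p
      = ∑ p ∈ Finset.univ.filter (fun p : Fin n × Fin n => p.1 ≤ p.2),
          ((if p.1 = p.2 then 1 else 2 : ℕ) • f p) := by
  have h1 : ∑ p ∈ Finset.univ.filter (fun p : Fin n × Fin n => ¬ p.1 ≤ p.2), f p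
      = ∑ p ∈ Finset.univ.filter (fun p : Fin n × Fin n => p.1 < p.2), f p := by
    refine Finset.sum_nbij' (fun p => p.swap) (fun p => p.swap) ?_ ?_ ?_ ?_ ?_ <;>
      simp +contextual [Prod.ext_iff, lt_iff_le_and_ne, not_le, hf]
  have h2 : ∑ p ∈ Finset.univ.filter (fun p : Fin n × Fin n => p.1 ≤ p.2),
        (if p.1 = p.2 then (0:M) else f p)
      = ∑ p ∈ Finset.univ.filter (fun p : Fin n × Fin n => p.1 < p.2), f p := by
    rw [Finset.sum_filter, Finset.sum_filter]
    refine Finset.sum_congr rfl fun p _ => ?_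
    rcases lt_trichotomy p.1 p.2 with h | h | h
    · simp [h, le_of_lt h, ne_of_lt h]
    · simp [h, le_of_eq h]
    · simp [not_le_of_gt h, not_lt_of_ge (le_of_lt h), ne_of_gt h]
  have h3 : ∀ p : Fin n × Fin n, ((if p.1 = p.2 then 1 else 2 : ℕ) • f p)
      = f p + (if p.1 = p.2 then (0:M) else f p) := by
    intro p; split <;> simp [two_nsmul]
  calc ∑ p : Fin n × Fin n, f p
      = ∑ p ∈ Finset.univ.filter (fun p : Fin n × Fin n => p.1 ≤ p.2), f p
        + ∑ p ∈ Finset.univ.filter (fun p : Fin n × Fin n => ¬ p.1 ≤ p.2), f p :=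
        (Finset.sum_filter_add_sum_filter_not _ _ _).symm
    _ = _ := by
        rw [h1, ← h2, ← Finset.sum_add_distrib]
        exact Finset.sum_congr rfl fun p _ => (h3 p).symm

theorem conj_vmv (B : Matrix (Fin n) (Fin n) ℝ) (u : Fin n → ℝ) :
    B * vecMulVec u u * Bᵀ = vecMulVec (B *ᵥ u) (B *ᵥ u) := by
  ext a b
  simp only [mul_apply, vecMulVec_apply, mulVec, dotProduct, transpose_apply,
    Finset.sum_mul, Finset.mul_sum]
  exact Finset.sum_congr rfl fun i _ => Finset.sum_congr rfl fun j _ => by ring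

theorem smul_vmv (c : ℝ) (u : Fin n → ℝ) :
    vecMulVec (c • u) (c • u) = (c * c) • vecMulVec u u := by
  ext a b
  simp only [vecMulVec_apply, Pi.smul_apply, Matrix.smul_apply, smul_eq_mul]
  ring

theorem card_pairs (n : ℕ) :
    Fintype.card {p : Fin n × Fin n // p.1 ≤ p.2} = n * (n + 1) / 2 := by
  rw [← Fintype.card_congr (Sym2.sortEquiv (α := Fin n)), Sym2.card]
  simp [Nat.choose_two_right, Nat.mul_comm]

theorem cpos (hn : 0 < n) :
    (Matrix.of fun i j : Fin n => (if i = j then (1:ℝ) else 0) + 1/n).PosDef := by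
  rw [Matrix.posDef_iff_dotProduct_mulVec]
  constructor
  · rw [Matrix.IsHermitian]
    ext i j
    simp [Matrix.conjTranspose_apply, eq_comm]
  · intro x hx
    have key : (star x) ⬝ᵥ ((Matrix.of fun i j : Fin n => (if i = j then (1:ℝ) else 0) + 1/n) *ᵥ x)
        = (∑ i, x i ^ 2) + (∑ i, x i)^2 / n := by
      simp only [star_trivial, dotProduct, mulVec, of_apply, add_mul, mul_add, ite_mul,
        one_mul, zero_mul, Finset.sum_add_distrib, Finset.sum_ite_eq, Finset.mem_univ, if_true]
      simp only [← Finset.sum_mul, ← Finset.mul_sum, ← sq]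
      ring
    rw [key]
    obtain ⟨i, hi⟩ : ∃ i, x i ≠ 0 := by
      by_contra hcon
      push_neg at hcon
      exact hx (funext hcon)
    have h1 : 0 < ∑ i, x i ^ 2 :=
      Finset.sum_pos' (fun j _ => sq_nonneg _) ⟨i, Finset.mem_univ i, by positivity⟩
    have h2 : 0 ≤ (∑ i, x i)^2 / n := by positivity
    linarith

open scoped MatrixOrder in
theorem exists_B (g₀ C : Matrix (Fin n) (Fin n) ℝ) (hpos : g₀.PosDef) (hC : C.PosDef) :
    ∃ B : Matrix (Fin n) (Fin n) ℝ, IsUnit B.det ∧ B⁻¹ * g₀ * B⁻¹ᵀ = C := by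
  set S := CFC.sqrt g₀ with hSdef
  set R := CFC.sqrt C with hRdef
  have hSsym : Sᵀ = S := by
    have := (Matrix.nonneg_iff_posSemidef.1 (CFC.sqrt_nonneg g₀)).1
    rwa [Matrix.IsHermitian, conjTranspose_eq_transpose_of_trivial] at this
  have hRsym : Rᵀ = R := by
    have := (Matrix.nonneg_iff_posSemidef.1 (CFC.sqrt_nonneg C)).1
    rwa [Matrix.IsHermitian, conjTranspose_eq_transpose_of_trivial] at this
  have hSS : S * S = g₀ := CFC.sqrt_mul_sqrt_self g₀ (Matrix.nonneg_iff_posSemidef.2 hpos.posSemidef)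
  have hRR : R * R = C := CFC.sqrt_mul_sqrt_self C (Matrix.nonneg_iff_posSemidef.2 hC.posSemidef)
  have hdetS : IsUnit S.det := by
    have h : S.det * S.det = g₀.det := by rw [← det_mul, hSS]
    refine isUnit_iff_ne_zero.2 fun h0 => hpos.det_pos.ne' ?_
    rw [← h, h0, mul_zero]
  have hdetR : IsUnit R.det := by
    have h : R.det * R.det = C.det := by rw [← det_mul, hRR]
    refine isUnit_iff_ne_zero.2 fun h0 => hC.det_pos.ne' ?_
    rw [← h, h0, mul_zero]
  refine ⟨S * R⁻¹, ?_, ?_⟩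
  · rw [det_mul]
    exact hdetS.mul (Matrix.isUnit_nonsing_inv_det _ hdetR)
  · rw [Matrix.mul_inv_rev, Matrix.nonsing_inv_nonsing_inv _ hdetR, transpose_mul,
      transpose_nonsing_inv, hSsym, hRsym, ← hSS]
    have h1 : S⁻¹ * (S * (S * (S⁻¹ * R))) = R := by
      rw [← mul_assoc S⁻¹ S, nonsing_inv_mul _ hdetS, one_mul, ← mul_assoc S S⁻¹,
        mul_nonsing_inv _ hdetS, one_mul]
    simp only [mul_assoc]
    rw [h1, hRR]

/-- entry functional -/
def entryL (p q : Fin n) : Matrix (Fin n) (Fin n) ℝ →ₗ[ℝ] ℝ where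
  toFun g := g p q
  map_add' _ _ := rfl
  map_smul' _ _ := rfl

theorem entryL_apply (p q : Fin n) (g : Matrix (Fin n) (Fin n) ℝ) : entryL p q g = g p q := rfl

/-- row sum functional -/
noncomputable def rowSumL (p : Fin n) : Matrix (Fin n) (Fin n) ℝ →ₗ[ℝ] ℝ := ∑ k, entryL p k

theorem rowSumL_apply (p : Fin n) (g : Matrix (Fin n) (Fin n) ℝ) :
    rowSumL p g = ∑ k, g p k := by
  simp [rowSumL, entryL_apply, LinearMap.sum_apply, LinearMap.coe_mk, AddHom.coe_mk]

/-- coefficient functional for a pair -/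
noncomputable def coeffL (i j : Fin n) : Matrix (Fin n) (Fin n) ℝ →ₗ[ℝ] ℝ :=
  if i = j then (4:ℝ)⁻¹ • ((2:ℝ) • entryL i i - rowSumL i) else entryL i j

/-- the value of the coefficient functional -/
theorem coeffL_apply (i j : Fin n) (g : Matrix (Fin n) (Fin n) ℝ) :
    coeffL i j g = if i = j then (2 * g i i - ∑ k, g i k)/4 else g i j := by
  unfold coeffL
  split
  · simp [rowSumL_apply, entryL_apply, LinearMap.smul_apply, LinearMap.sub_apply, smul_eq_mul]
    ring
  · rfl

theorem decomp_filtered (B : Matrix (Fin n) (Fin n) ℝ) (hdetB : IsUnit B.det)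
    (g : Matrix (Fin n) (Fin n) ℝ) (hg : g.IsSymm) :
    g = ∑ p ∈ Finset.univ.filter (fun p : Fin n × Fin n => p.1 ≤ p.2),
      coeffL p.1 p.2 (B⁻¹ * g * B⁻¹ᵀ) • vecMulVec (B *ᵥ wv p.1 p.2) (B *ᵥ wv p.1 p.2) := by
  set A := B⁻¹ with hA
  set h : Matrix (Fin n) (Fin n) ℝ := A * g * Aᵀ with hh
  have hhsymm : h.IsSymm := by
    show hᵀ = h
    rw [hh, transpose_mul, transpose_mul, transpose_transpose, hg.eq, mul_assoc]
  have hsym' : ∀ i j, h j i = h i j := hhsymm.apply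
  have hgBhB : g = B * h * Bᵀ := by
    rw [hh]
    simp only [← mul_assoc]
    rw [hA, mul_nonsing_inv _ hdetB, one_mul, mul_assoc, ← transpose_mul,
      mul_nonsing_inv _ hdetB, transpose_one, mul_one]
  have hstep : g = ∑ p : Fin n × Fin n,
      (h p.1 p.2 / 2 - if p.1 = p.2 then (∑ t, h p.1 t)/4 else 0) •
        vecMulVec (B *ᵥ wv p.1 p.2) (B *ᵥ wv p.1 p.2) := by
    calc g = B * h * Bᵀ := hgBhB
      _ = B * (∑ i : Fin n, ∑ j : Fin n,
            (h i j / 2 - if i = j then (∑ t, h i t)/4 else 0) • vecMulVec (wv i j) (wv i j)) * Bᵀ := by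
          rw [← core_mat h hhsymm]
      _ = ∑ i : Fin n, ∑ j : Fin n,
            (h i j / 2 - if i = j then (∑ t, h i t)/4 else 0) •
              vecMulVec (B *ᵥ wv i j) (B *ᵥ wv i j) := by
          simp only [Matrix.mul_sum, Matrix.sum_mul, Matrix.mul_smul, Matrix.smul_mul, conj_vmv]
      _ = _ := by
          rw [← Finset.univ_product_univ, Finset.sum_product]
  rw [hstep, sum_pairs _ ?_]
  · refine Finset.sum_congr rfl fun p hp => ?_
    rw [coeffL_apply]
    by_cases hd : p.1 = p.2
    · rw [if_pos hd, if_pos hd, if_pos hd, one_smul, hd]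
      congr 1
      ring
    · rw [if_neg hd, if_neg hd, if_neg hd, two_nsmul, ← add_smul]
      congr 1
      ring
  · intro p
    simp only [Prod.fst_swap, Prod.snd_swap]
    by_cases hd : p.1 = p.2
    · rw [hd]
    · rw [if_neg hd, if_neg (fun hh' : p.2 = p.1 => hd hh'.symm), wv_symm, hsym' p.1 p.2]
end Stmt8Aux
end Stmt8AuxSection


open Stmt8Aux in
/-- primitive decomposition of symmetric matrices: given a symmetric positive
definite `g₀`, there are `r > 0`, unit vectors `ν₁, …, ν_{n*}` (`n* = n(n+1)/2`) and linear
maps `L_k : Sym_n → ℝ` with `g = Σ_k L_k(g) ν_k ⊗ ν_k` for all symmetric `g`, and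
`L_k(g) > r` whenever `g` is symmetric with `|g − g₀| < r`. -/
theorem stmt8 (n : ℕ) (hn : 0 < n) (g₀ : Matrix (Fin n) (Fin n) ℝ) (hpos : g₀.PosDef) :
    ∃ r > 0, ∃ ν : Fin (n * (n + 1) / 2) → (Fin n → ℝ),
      ∃ L : Fin (n * (n + 1) / 2) → (Matrix (Fin n) (Fin n) ℝ →ₗ[ℝ] ℝ),
        (∀ k, ∑ i, ν k i ^ 2 = 1) ∧
        (∀ g : Matrix (Fin n) (Fin n) ℝ, g.IsSymm →
          g = ∑ k, L k g • vecMulVec (ν k) (ν k)) ∧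
        (∀ g : Matrix (Fin n) (Fin n) ℝ, g.IsSymm →
          (∀ i j, |g i j - g₀ i j| < r) → ∀ k, r < L k g) := by
  classical
  obtain ⟨B, hdetB, hBC⟩ := exists_B g₀ _ hpos (cpos hn)
  set σ : Fin (n * (n + 1) / 2) ≃ {p : Fin n × Fin n // p.1 ≤ p.2} :=
    (Fintype.equivFinOfCardEq (card_pairs n)).symm with hσ
  -- the conjugation linear map
  set conjL : Matrix (Fin n) (Fin n) ℝ →ₗ[ℝ] Matrix (Fin n) (Fin n) ℝ :=
    (LinearMap.mulLeft ℝ B⁻¹).comp (LinearMap.mulRight ℝ B⁻¹ᵀ) with hconjL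
  have hconj : ∀ g, conjL g = B⁻¹ * g * B⁻¹ᵀ := fun g => (mul_assoc _ _ _).symm
  -- raw vectors, norms
  set bw : {p : Fin n × Fin n // p.1 ≤ p.2} → (Fin n → ℝ) :=
    fun q => B *ᵥ wv q.1.1 q.1.2 with hbw
  set msq : {p : Fin n × Fin n // p.1 ≤ p.2} → ℝ := fun q => ∑ i, bw q i ^ 2 with hmsqdef
  have hbwne : ∀ q, bw q ≠ 0 := by
    intro q hq0
    have hw : wv q.1.1 q.1.2 = 0 := by
      have := congrArg (fun v => B⁻¹ *ᵥ v) hq0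
      simpa [hbw, Matrix.mulVec_mulVec, Matrix.nonsing_inv_mul _ hdetB] using this
    have h2 : (1:ℝ) + (if q.1.1 = q.1.2 then (1:ℝ) else 0) = 0 := by
      simpa [wv] using congrFun hw q.1.1
    have h3 : (0:ℝ) ≤ if q.1.1 = q.1.2 then (1:ℝ) else 0 := by split <;> norm_num
    linarith
  have hmsq : ∀ q, 0 < msq q := by
    intro q
    obtain ⟨i, hi⟩ := Function.ne_iff.1 (hbwne q)
    exact Finset.sum_pos' (fun j _ => sq_nonneg _) ⟨i, Finset.mem_univ i, by
      simp only [Pi.zero_apply] at hi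
      positivity⟩
  -- the witnesses
  set ν : Fin (n * (n + 1) / 2) → (Fin n → ℝ) :=
    fun k => (Real.sqrt (msq (σ k)))⁻¹ • bw (σ k) with hν
  set L : Fin (n * (n + 1) / 2) → (Matrix (Fin n) (Fin n) ℝ →ₗ[ℝ] ℝ) :=
    fun k => msq (σ k) • ((coeffL (σ k).1.1 (σ k).1.2).comp conjL) with hL
  have Lval : ∀ k g, L k g = msq (σ k) * coeffL (σ k).1.1 (σ k).1.2 (B⁻¹ * g * B⁻¹ᵀ) := by
    intro k g
    simp only [hL, LinearMap.smul_apply, LinearMap.comp_apply, smul_eq_mul, hconj]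
  have hsqrtmul : ∀ q, (Real.sqrt (msq q))⁻¹ * (Real.sqrt (msq q))⁻¹ = (msq q)⁻¹ := by
    intro q
    rw [← mul_inv, Real.mul_self_sqrt (hmsq q).le]
  -- unit norms
  have hunit : ∀ k, ∑ i, ν k i ^ 2 = 1 := by
    intro k
    simp only [hν, Pi.smul_apply, smul_eq_mul, mul_pow, ← Finset.mul_sum]
    rw [inv_pow, Real.sq_sqrt (hmsq (σ k)).le]
    exact inv_mul_cancel₀ (hmsq (σ k)).ne'
  -- decomposition
  have hdecomp : ∀ g : Matrix (Fin n) (Fin n) ℝ, g.IsSymm →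
      g = ∑ k, L k g • vecMulVec (ν k) (ν k) := by
    intro g hg
    have hperk : ∀ k, L k g • vecMulVec (ν k) (ν k)
        = coeffL (σ k).1.1 (σ k).1.2 (B⁻¹ * g * B⁻¹ᵀ) • vecMulVec (bw (σ k)) (bw (σ k)) := by
      intro k
      rw [hν]
      show L k g • vecMulVec ((Real.sqrt (msq (σ k)))⁻¹ • bw (σ k)) _ = _
      rw [smul_vmv, hsqrtmul, smul_smul, Lval]
      congr 1
      have := (hmsq (σ k)).ne'
      field_simp
    calc g = ∑ p ∈ Finset.univ.filter (fun p : Fin n × Fin n => p.1 ≤ p.2),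
          coeffL p.1 p.2 (B⁻¹ * g * B⁻¹ᵀ) • vecMulVec (B *ᵥ wv p.1 p.2) (B *ᵥ wv p.1 p.2) :=
        decomp_filtered B hdetB g hg
      _ = ∑ q : {p : Fin n × Fin n // p.1 ≤ p.2},
          coeffL q.1.1 q.1.2 (B⁻¹ * g * B⁻¹ᵀ) • vecMulVec (bw q) (bw q) := by
          exact Finset.sum_subtype _ (fun p => by simp) _
      _ = ∑ k, L k g • vecMulVec (ν k) (ν k) := by
          rw [← Equiv.sum_comp σ (fun q => coeffL q.1.1 q.1.2 (B⁻¹ * g * B⁻¹ᵀ)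
            • vecMulVec (bw q) (bw q))]
          exact Finset.sum_congr rfl fun k _ => (hperk k).symm
  -- positivity at g₀
  have hLg₀ : ∀ k, 0 < L k g₀ := by
    intro k
    rw [Lval, hBC, coeffL_apply]
    refine mul_pos (hmsq (σ k)) ?_
    by_cases hd : (σ k).1.1 = (σ k).1.2
    · rw [if_pos hd]
      have hsum : ∑ t : Fin n, ((Matrix.of fun i j : Fin n =>
          (if i = j then (1:ℝ) else 0) + 1/n) (σ k).1.1 t) = 2 := by
        simp only [of_apply, Finset.sum_add_distrib, Finset.sum_ite_eq, Finset.mem_univ, if_true,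
          Finset.sum_const, Finset.card_univ, Fintype.card_fin, nsmul_eq_mul]
        field_simp
        norm_num
      rw [hsum]
      simp only [of_apply, eq_self_iff_true, if_true]
      have h1n : (0:ℝ) < 1/n := by positivity
      linarith
    · rw [if_neg hd]
      simp only [of_apply, if_neg hd]
      positivity
  -- choose r
  have hNpos : 0 < n * (n + 1) / 2 := by
    have h2 : 1 * 2 ≤ n * (n + 1) := Nat.mul_le_mul hn (by omega)
    have := (Nat.le_div_iff_mul_le (by norm_num : 0 < 2)).2 h2
    omega
  have hne : (Finset.univ : Finset (Fin (n * (n + 1) / 2))).Nonempty :=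
    ⟨⟨0, hNpos⟩, Finset.mem_univ _⟩
  set ε := Finset.univ.inf' hne (fun k => L k g₀) with hεdef
  have hεpos : 0 < ε := (Finset.lt_inf'_iff hne).2 (fun k _ => hLg₀ k)
  set K := ∑ k, ∑ i, ∑ j, |L k (Matrix.single i j (1:ℝ))| with hK
  have hK0 : 0 ≤ K := by positivity
  refine ⟨ε / (K + 2), div_pos hεpos (by linarith), ν, L, hunit, hdecomp, ?_⟩
  intro g hg hnear k
  set r := ε / (K + 2) with hr
  have hrK : r * (K + 2) = ε := div_mul_cancel₀ _ (by linarith : (0:ℝ) < K + 2).ne'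
  have hrpos : 0 < r := div_pos hεpos (by linarith)
  have hexp : L k (g - g₀) = ∑ i, ∑ j, (g - g₀) i j * L k (Matrix.single i j (1:ℝ)) := by
    conv_lhs => rw [matrix_eq_sum_single (g - g₀)]
    rw [map_sum]
    refine Finset.sum_congr rfl fun i _ => ?_
    rw [map_sum]
    refine Finset.sum_congr rfl fun j _ => ?_
    rw [show Matrix.single i j ((g - g₀) i j) = (g - g₀) i j • Matrix.single i j (1:ℝ) by
      rw [Matrix.smul_single, smul_eq_mul, mul_one], LinearMap.map_smul, smul_eq_mul]
  have habs : |L k (g - g₀)| ≤ r * (∑ i, ∑ j, |L k (Matrix.single i j (1:ℝ))|) := by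
    rw [hexp, Finset.mul_sum]
    refine (Finset.abs_sum_le_sum_abs _ _).trans (Finset.sum_le_sum fun i _ => ?_)
    rw [Finset.mul_sum]
    refine (Finset.abs_sum_le_sum_abs _ _).trans (Finset.sum_le_sum fun j _ => ?_)
    rw [abs_mul]
    refine mul_le_mul_of_nonneg_right ?_ (abs_nonneg _)
    rw [Matrix.sub_apply]
    exact (hnear i j).le
  have hkK : (∑ i, ∑ j, |L k (Matrix.single i j (1:ℝ))|) ≤ K :=
    Finset.single_le_sum (f := fun k' => ∑ i, ∑ j, |L k' (Matrix.single i j (1:ℝ))|)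
      (fun _ _ => by positivity) (Finset.mem_univ k)
  have h2 : |L k (g - g₀)| ≤ r * K := habs.trans (mul_le_mul_of_nonneg_left hkK hrpos.le)
  have h3 : -(r * K) ≤ L k (g - g₀) := (abs_le.1 h2).1
  have hεk : ε ≤ L k g₀ := Finset.inf'_le _ (Finset.mem_univ k)
  have hLsub : L k (g - g₀) = L k g - L k g₀ := by rw [map_sub]
  linarith
end
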